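/- arXiv:2306.10871 — 7 statements merged into one kernel-verified Lean document; each statement's English description precedes it below -/
import Mathlib

section
/- Let P be a finite set; for each p ∈ P let Q_p be an invertible n×n complex matrix and c_p > 0 a constant. Let 𝕄 be a nonempty compact set of n×n real matrices, and let E ⊆ P × P be a relation containing no directed cycle. Then for every ε ∈ (0,1) there exist positive real scalars (s_p)_{p∈P} such that, setting P_p = s_p·Q_p, one has c_p·‖P_q⁻¹·M·P_p‖ < ε for every (p,q) ∈ E and every M ∈ 𝕄. -/
open Matrix
open scoped Matrix.Norms.L2Operator

def NoDirectedCycle {P : Type*} (E : P → P → Prop) : Prop :=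
  ∀ a b, E a b → ¬ Relation.ReflTransGen E b a

/-! Counting strict predecessors ranks the vertices of a finite acyclic relation, with the rank
increasing along every edge. Scaling `Q p` by `x ^ r p` multiplies the edge quantity by
`x ^ r p / x ^ r q ≤ x⁻¹`, while `c p ‖(Q q)⁻¹ M Q p‖` stays bounded on the compact set `𝕄`;
a large `x` therefore pushes every edge quantity below `ε`. -/

-- For singular `A` both sides are `0`, by the junk value of `Matrix.inv`.
theorem Matrix.smul_inv {K n : Type*} [Field K] [Fintype n] [DecidableEq n]
    (a : K) (A : Matrix n n K) : (a • A)⁻¹ = a⁻¹ • A⁻¹ := by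
  rcases eq_or_ne a 0 with rfl | ha
  · simp
  by_cases hA : IsUnit A.det
  · exact inv_smul' (k := Units.mk0 a ha) (h := hA)
  · have haA : ¬ IsUnit (a • A).det := by
      rw [det_smul, IsUnit.mul_iff, not_and_or]
      exact Or.inr hA
    rw [nonsing_inv_apply_not_isUnit _ haA, nonsing_inv_apply_not_isUnit _ hA, smul_zero]

theorem Matrix.l2_opNorm_inv_smul_mul_mul_smul {𝕜 n : Type*} [RCLike 𝕜] [Fintype n]
    [DecidableEq n] (a b : 𝕜) (A X B : Matrix n n 𝕜) :
    ‖(a • A)⁻¹ * X * (b • B)‖ = ‖b‖ / ‖a‖ * ‖A⁻¹ * X * B‖ := by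
  simp only [Matrix.smul_inv, smul_mul_assoc, mul_smul_comm, smul_smul]
  rw [norm_smul, norm_mul, norm_inv, div_eq_mul_inv]

theorem pow_div_pow_le_inv {R : Type*} [Field R] [LinearOrder R] [IsStrictOrderedRing R]
    {x : R} (hx : 1 ≤ x) {m k : ℕ} (hmk : m < k) : x ^ m / x ^ k ≤ x⁻¹ := by
  have hx0 : 0 < x := zero_lt_one.trans_le hx
  rw [div_le_iff₀ (pow_pos hx0 k), ← div_eq_inv_mul, le_div_iff₀ hx0, ← pow_succ]
  exact pow_le_pow_right₀ hx hmk

namespace NoDirectedCycle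

variable {P : Type*} {E : P → P → Prop}

theorem ncard_transGen_lt [Finite P] (hE : NoDirectedCycle E) {p q : P} (hpq : E p q) :
    {x | Relation.TransGen E x p}.ncard < {x | Relation.TransGen E x q}.ncard := by
  refine Set.ncard_lt_ncard ⟨fun x hx => hx.tail hpq, fun hsub => ?_⟩ (Set.toFinite _)
  obtain ⟨b, hpb, hbp⟩ := Relation.TransGen.head'_iff.mp (hsub (Relation.TransGen.single hpq))
  exact hE p b hpb hbp

theorem exists_rank [Finite P] (hE : NoDirectedCycle E) :
    ∃ r : P → ℕ, ∀ p q, E p q → r p < r q :=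
  ⟨_, fun _ _ => hE.ncard_transGen_lt⟩

theorem exists_pos_div_mul_lt [Finite P] (hE : NoDirectedCycle E) {ι : Type*} {S : Set ι}
    {f : P → P → ι → ℝ} (hf : ∀ p q, BddAbove (f p q '' S)) {ε : ℝ} (hε : 0 < ε) :
    ∃ s : P → ℝ, (∀ p, 0 < s p) ∧ ∀ p q, E p q → ∀ i ∈ S, s p / s q * f p q i < ε := by
  choose B hB using hf
  obtain ⟨C, hC⟩ := Finite.bddAbove_range fun pq : P × P => B pq.1 pq.2
  set D := max C 0
  have hfD : ∀ p q, ∀ i ∈ S, f p q i ≤ D := fun p q i hi =>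
    ((hB p q ⟨i, hi, rfl⟩).trans (hC ⟨(p, q), rfl⟩)).trans (le_max_left _ _)
  obtain ⟨r, hr⟩ := hE.exists_rank
  set x := D / ε + 1
  have hx1 : 1 ≤ x := le_add_of_nonneg_left (by positivity)
  have hx0 : 0 < x := zero_lt_one.trans_le hx1
  refine ⟨fun p => x ^ r p, fun p => pow_pos hx0 _, fun p q hpq i hi => ?_⟩
  calc x ^ r p / x ^ r q * f p q i ≤ x ^ r p / x ^ r q * D := by gcongr; exact hfD p q i hi
    _ ≤ x⁻¹ * D := by gcongr; exact pow_div_pow_le_inv hx1 (hr p q hpq)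
    _ < ε := by
        rw [inv_mul_lt_iff₀ hx0, add_mul, div_mul_cancel₀ _ hε.ne', one_mul]
        linarith

end NoDirectedCycle

theorem scaling_lemma_acyclic_general {n : ℕ} {P : Type*} [Fintype P]
    (Q : P → Matrix (Fin n) (Fin n) ℂ)
    (c : P → ℝ)
    (𝕄 : Set (Matrix (Fin n) (Fin n) ℝ)) (h𝕄 : IsCompact 𝕄)
    (E : P → P → Prop) (hE : NoDirectedCycle E)
    (ε : ℝ) (hε0 : 0 < ε) :
    ∃ s : P → ℝ, (∀ p, 0 < s p) ∧
      ∀ p q, E p q → ∀ M ∈ 𝕄,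
        c p * ‖((s q : ℂ) • Q q)⁻¹ * M.map (Complex.ofReal ·) * ((s p : ℂ) • Q p)‖ < ε := by
  have hbdd : ∀ p q, BddAbove ((fun M : Matrix (Fin n) (Fin n) ℝ =>
      c p * ‖(Q q)⁻¹ * M.map (Complex.ofReal ·) * Q p‖) '' 𝕄) :=
    fun p q => (h𝕄.image (by fun_prop)).bddAbove
  obtain ⟨s, hs, hlt⟩ := hE.exists_pos_div_mul_lt hbdd hε0
  refine ⟨s, hs, fun p q hpq M hM => ?_⟩
  rw [Matrix.l2_opNorm_inv_smul_mul_mul_smul, Complex.norm_real, Complex.norm_real,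
    Real.norm_of_nonneg (hs p).le, Real.norm_of_nonneg (hs q).le, mul_left_comm]
  exact hlt p q hpq M hM

/-- Scaling lemma: given invertible complex matrices `Q p`, constants `c p > 0`, a nonempty
compact set `𝕄` of real matrices and an acyclic relation `E`, for every `ε ∈ (0,1)` there are
positive scalars `s p` such that, setting `P_p = s_p • Q_p`, the quantities
`c_p ‖P_q⁻¹ M P_p‖` are `< ε` along every edge `(p,q) ∈ E` and every `M ∈ 𝕄`. -/
theorem scaling_lemma_acyclic {n : ℕ} {P : Type*} [Fintype P]
    (Q : P → Matrix (Fin n) (Fin n) ℂ) (hQ : ∀ p, IsUnit (Q p))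
    (c : P → ℝ) (hc : ∀ p, 0 < c p)
    (𝕄 : Set (Matrix (Fin n) (Fin n) ℝ)) (h𝕄ne : 𝕄.Nonempty) (h𝕄 : IsCompact 𝕄)
    (E : P → P → Prop) (hE : NoDirectedCycle E)
    (ε : ℝ) (hε0 : 0 < ε) (hε1 : ε < 1) :
    ∃ s : P → ℝ, (∀ p, 0 < s p) ∧
      ∀ p q, E p q → ∀ M ∈ 𝕄,
        c p * ‖((s q : ℂ) • Q q)⁻¹ * M.map (Complex.ofReal ·) * ((s p : ℂ) • Q p)‖ < ε :=
  scaling_lemma_acyclic_general Q c 𝕄 h𝕄 E hE ε hε0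
end

section
/- Let P be a finite index set and (A_p)_{p∈P} n×n real matrices with P = 𝔰 ∪ 𝔲. Let E ⊆ P × P be a set of admissible switches such that the subrelation E_u = {(p,q) ∈ E : p ∈ 𝔲} contains no directed cycle, and let 𝕄 be a nonempty compact set of n×n real matrices not containing the zero matrix. Then there exist τ* ≥ 0, η* > 0, a family of reset matrices R_{(p,q)} ∈ 𝕄 for (p,q) ∈ E, and a constant C > 0 such that for every j ≥ 0, every sequence p_0, …, p_j ∈ P with (p_{k−1},p_k) ∈ E for 1 ≤ k ≤ j, all durations d_1, …, d_j > 0 with d_k ≥ τ* whenever p_{k−1} ∈ 𝔰 and d_k ≤ η* whenever p_{k−1} ∈ 𝔲, and every s ≥ 0 with s ≤ η* whenever p_j ∈ 𝔲, one has ‖exp(s·A_{p_j})·Φ_j‖ ≤ C; that is, the reset switched system governed by the graph E with resets chosen from 𝕄 is stable for all E-admissible switching signals with dwell time τ* and flee time η*. -/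
open Matrix NormedSpace
open scoped Matrix.Norms.L2Operator

noncomputable section

/-- A real square matrix is Hurwitz stable if every eigenvalue of it, regarded as a
complex matrix, has negative real part. -/
def HurwitzStable {n : ℕ} (A : Matrix (Fin n) (Fin n) ℝ) : Prop :=
  ∀ μ ∈ spectrum ℂ (A.map (Complex.ofReal ·)), μ.re < 0

/-- A real square matrix is unstable if some eigenvalue of it, regarded as a
complex matrix, has positive real part. -/
def HasUnstableEigenvalue {n : ℕ} (A : Matrix (Fin n) (Fin n) ℝ) : Prop :=
  ∃ μ ∈ spectrum ℂ (A.map (Complex.ofReal ·)), 0 < μ.re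

/-- The transition matrix `Φ_j` of the reset switched system: for the switching sequence
`p 0, p 1, …`, durations `d 1, d 2, …` and reset matrices `R`, it is
`Φ_j = R_{(p_{j−1},p_j)} exp(d_j A_{p_{j−1}}) ⋯ R_{(p_0,p_1)} exp(d_1 A_{p_0})`, `Φ_0 = 1`. -/
def resetTransition {n : ℕ} {P : Type*} (A : P → Matrix (Fin n) (Fin n) ℝ)
    (R : P → P → Matrix (Fin n) (Fin n) ℝ) (p : ℕ → P) (d : ℕ → ℝ) :
    ℕ → Matrix (Fin n) (Fin n) ℝ
  | 0 => 1
  | j + 1 => R (p j) (p (j + 1)) * exp (d (j + 1) • A (p j)) * resetTransition A R p d j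

/-- The transition matrix `Ψ_j` of the impulsive switched system: for the switching sequence
`p 0, p 1, …`, durations `d 1, d 2, …` and impulse matrices `M 1, M 2, …`, it is
`Ψ_j = M_j exp(d_j A_{p_{j−1}}) ⋯ M_1 exp(d_1 A_{p_0})`, `Ψ_0 = 1`. -/
def impulsiveTransition {n : ℕ} {P : Type*} (A : P → Matrix (Fin n) (Fin n) ℝ)
    (M : ℕ → Matrix (Fin n) (Fin n) ℝ) (p : ℕ → P) (d : ℕ → ℝ) :
    ℕ → Matrix (Fin n) (Fin n) ℝ
  | 0 => 1
  | j + 1 => M (j + 1) * exp (d (j + 1) • A (p j)) * impulsiveTransition A M p d j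

/-!
All resets are taken equal to one `M₀ ∈ 𝕄`, the flee time is `1`, and `u ≥ 1` bounds
`‖M₀‖ ‖exp (t A_q)‖` for `t ∈ [0, 1]`. Since the unstable part of `E` is acyclic, a run of
consecutive unstable modes visits pairwise distinct modes, so it is shorter than `|P|` and inflates
the transition matrix by at most `u ^ |P|`. For a Hurwitz stable `A` the eigenvalues of
`exp A` are the exponentials of those of `A` (over `ℂ`), hence lie in the open unit disc, and
Gelfand's formula gives `(exp A) ^ k → 0`, so `exp (t A) → 0`. A long enough dwell time therefore
makes each stable step contract by `u ^ |P|`, which undoes the preceding unstable run; thus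
`‖Φ_j‖ ≤ u ^ |P|` along every admissible signal.
-/

section Exponential

variable {ι : Type*} [Fintype ι] [DecidableEq ι]

theorem Matrix.exp_mulVec_of_mulVec_eq_smul {M : Matrix ι ι ℂ} {μ : ℂ} {w : ι → ℂ}
    (hw : M *ᵥ w = μ • w) : exp M *ᵥ w = Complex.exp μ • w := by
  have hpow : ∀ k : ℕ, M ^ k *ᵥ w = μ ^ k • w := by
    intro k
    induction k with
    | zero => simp
    | succ k ih => rw [pow_succ', ← mulVec_mulVec, ih, mulVec_smul, hw, smul_smul, pow_succ]
  let L : Matrix ι ι ℂ →L[ℂ] (ι → ℂ) :=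
    LinearMap.toContinuousLinearMap (LinearMap.applyₗ w ∘ₗ Matrix.toLin'.toLinearMap)
  have hsum := (exp_series_hasSum_exp' (𝕂 := ℂ) M).mapL L
  simp only [L, LinearMap.coe_toContinuousLinearMap', LinearMap.coe_comp, Function.comp_apply,
    LinearEquiv.coe_coe, Matrix.toLin'_apply, LinearMap.applyₗ_apply_apply, smul_mulVec, hpow,
    smul_smul] at hsum
  exact hsum.unique (by simpa only [smul_eq_mul, ← Complex.exp_eq_exp_ℂ] using
    (exp_series_hasSum_exp' (𝕂 := ℂ) μ).smul_const w)

theorem Matrix.exists_exp_eq_of_mem_spectrum_exp {M : Matrix ι ι ℂ} {z : ℂ}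
    (hz : z ∈ spectrum ℂ (exp M)) : ∃ μ ∈ spectrum ℂ M, Complex.exp μ = z := by
  have hcomm : Commute (toLin' (exp M)) (toLin' M) :=
    ((Commute.refl M).exp_left).map Matrix.toLinAlgEquiv'
  have hz' : Module.End.HasEigenvalue (toLin' (exp M)) z := by
    rwa [Module.End.hasEigenvalue_iff_mem_spectrum, Matrix.spectrum_toLin']
  have hmaps := Module.End.mapsTo_genEigenspace_of_comm hcomm z 1
  have : Nontrivial (Module.End.genEigenspace (toLin' (exp M)) z 1) :=
    Submodule.nontrivial_iff_ne_bot.2 hz'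
  obtain ⟨μ, hμ⟩ := Module.End.exists_eigenvalue ((toLin' M).restrict hmaps)
  obtain ⟨w, hw⟩ := hμ.exists_hasEigenvector
  have hMw : M *ᵥ w = μ • (w : ι → ℂ) := congrArg Subtype.val hw.apply_eq_smul
  have hexpw : exp M *ᵥ w = z • (w : ι → ℂ) := by
    rw [← Matrix.toLin'_apply]; exact Module.End.mem_eigenspace_iff.1 w.2
  have hw0 : (w : ι → ℂ) ≠ 0 := by simpa using hw.2
  refine ⟨μ, ?_, smul_left_injective ℂ hw0 ?_⟩
  · rw [← Matrix.spectrum_toLin', ← Module.End.hasEigenvalue_iff_mem_spectrum]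
    exact Module.End.hasEigenvalue_of_hasEigenvector
      ⟨Module.End.mem_eigenspace_iff.2 (by rwa [Matrix.toLin'_apply]), hw0⟩
  · simp only [← exp_mulVec_of_mulVec_eq_smul hMw, hexpw]

theorem Matrix.map_exp_ofReal (A : Matrix ι ι ℝ) :
    (exp A).map (Complex.ofReal ·) = exp (A.map (Complex.ofReal ·)) :=
  map_exp_of_mem_ball (𝕂 := ℝ) (𝔸 := Matrix ι ι ℝ) Complex.ofRealHom.mapMatrix
    (continuous_id.matrix_map Complex.continuous_ofReal) A
    ((expSeries_radius_eq_top ℝ (Matrix ι ι ℝ)).symm ▸ edist_lt_top _ _)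

end Exponential

section Asymptotics

open Filter Topology

theorem tendsto_pow_atTop_nhds_zero_of_forall_norm_lt_one {𝔸 : Type*} [NormedRing 𝔸]
    [NormedAlgebra ℂ 𝔸] [CompleteSpace 𝔸] {a : 𝔸} (ha : ∀ z ∈ spectrum ℂ a, ‖z‖ < 1) :
    Tendsto (a ^ ·) atTop (𝓝 0) := by
  rcases subsingleton_or_nontrivial 𝔸 with h𝔸 | h𝔸
  · exact tendsto_const_nhds.congr fun _ => Subsingleton.elim _ _
  obtain ⟨z, hz, hρ⟩ := spectrum.exists_nnnorm_eq_spectralRadius a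
  have hz1 : ‖z‖₊ < 1 := by exact_mod_cast ha z hz
  obtain ⟨r, hzr, hr1⟩ := exists_between hz1
  have hρr : spectralRadius ℂ a < r := hρ ▸ ENNReal.coe_lt_coe.2 hzr
  have hbound : ∀ᶠ k : ℕ in atTop, ‖a ^ k‖ ≤ (r : ℝ) ^ k := by
    filter_upwards [(spectrum.pow_nnnorm_pow_one_div_tendsto_nhds_spectralRadius a).eventually
      (gt_mem_nhds hρr), eventually_ge_atTop 1] with k hk hk1
    rw [one_div, ENNReal.rpow_inv_lt_iff (by positivity), ENNReal.rpow_natCast,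
      ← ENNReal.coe_pow, ENNReal.coe_lt_coe] at hk
    exact_mod_cast hk.le
  exact squeeze_zero_norm' hbound (tendsto_pow_atTop_nhds_zero_of_lt_one r.2 hr1)

theorem continuous_exp_smul {𝔸 : Type*} [NormedRing 𝔸] [NormedAlgebra ℝ 𝔸] [CompleteSpace 𝔸]
    (a : 𝔸) : Continuous fun t : ℝ => exp (t • a) :=
  (differentiable_exp_smul_const ℝ a).continuous

theorem exists_norm_exp_smul_le {P 𝔸 : Type*} [Finite P] [NormedRing 𝔸] [NormedAlgebra ℝ 𝔸]
    [CompleteSpace 𝔸] (A : P → 𝔸) (T : ℝ) :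
    ∃ c, ∀ p, ∀ t ∈ Set.Icc 0 T, ‖exp (t • A p)‖ ≤ c := by
  obtain ⟨c, hc⟩ := (isCompact_iUnion fun p =>
    isCompact_Icc.image (continuous_exp_smul (A p))).isBounded.exists_norm_le
  exact ⟨c, fun p t ht => hc _ (Set.mem_iUnion.2 ⟨p, Set.mem_image_of_mem _ ht⟩)⟩

variable {ι : Type*} [Fintype ι] [DecidableEq ι]

theorem Matrix.exp_smul_eq_exp_sub_floor_smul_mul_pow (A : Matrix ι ι ℝ) (t : ℝ) :
    exp (t • A) = exp ((t - ⌊t⌋₊) • A) * exp A ^ ⌊t⌋₊ := by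
  rw [← Matrix.exp_nsmul, ← Nat.cast_smul_eq_nsmul ℝ, ← Matrix.exp_add_of_commute _ _
    ((Commute.refl A).smul_left _ |>.smul_right _), ← add_smul, sub_add_cancel]

theorem Matrix.tendsto_exp_smul_atTop_of_tendsto_pow {A : Matrix ι ι ℝ}
    (hA : Tendsto (exp A ^ ·) atTop (𝓝 0)) :
    Tendsto (fun t : ℝ => exp (t • A)) atTop (𝓝 0) := by
  obtain ⟨c, hc⟩ := ((isCompact_Icc (a := (0 : ℝ)) (b := 1)).image
    (continuous_exp_smul A)).isBounded.exists_norm_le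
  have hfract : IsBoundedUnder (· ≤ ·) atTop (norm ∘ fun t : ℝ => exp ((t - ⌊t⌋₊) • A)) := by
    refine isBoundedUnder_of_eventually_le (a := c) ?_
    filter_upwards [eventually_ge_atTop 0] with t ht
    exact hc _ ⟨t - ⌊t⌋₊, ⟨by linarith [Nat.floor_le ht], by linarith [Nat.lt_floor_add_one t]⟩, rfl⟩
  refine (isBoundedUnder_le_mul_tendsto_zero hfract (hA.comp tendsto_nat_floor_atTop)).congr
    fun t => ?_
  exact (exp_smul_eq_exp_sub_floor_smul_mul_pow A t).symm

theorem Matrix.tendsto_pow_of_tendsto_map_ofReal_pow {B : Matrix ι ι ℝ}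
    (hB : Tendsto (fun k : ℕ => (B.map (Complex.ofReal ·)) ^ k) atTop (𝓝 0)) :
    Tendsto (B ^ ·) atTop (𝓝 0) := by
  have hpow : ∀ k : ℕ, (B.map (Complex.ofReal ·)) ^ k = (B ^ k).map (Complex.ofReal ·) :=
    fun k => (map_pow Complex.ofRealHom.mapMatrix B k).symm
  have hre := ((continuous_id.matrix_map Complex.continuous_re).tendsto 0).comp hB
  simpa [Function.comp_def, hpow, Matrix.map_map] using hre

theorem HurwitzStable.tendsto_exp_smul_atTop {n : ℕ} {A : Matrix (Fin n) (Fin n) ℝ}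
    (hA : HurwitzStable A) : Tendsto (fun t : ℝ => exp (t • A)) atTop (𝓝 0) := by
  have hspec : ∀ z ∈ spectrum ℂ (exp (A.map (Complex.ofReal ·))), ‖z‖ < 1 := by
    intro z hz
    obtain ⟨μ, hμ, rfl⟩ := Matrix.exists_exp_eq_of_mem_spectrum_exp hz
    rw [Complex.norm_exp, Real.exp_lt_one_iff]
    exact hA μ hμ
  refine Matrix.tendsto_exp_smul_atTop_of_tendsto_pow
    (Matrix.tendsto_pow_of_tendsto_map_ofReal_pow ?_)
  rw [Matrix.map_exp_ofReal]
  exact tendsto_pow_atTop_nhds_zero_of_forall_norm_lt_one hspec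

theorem exists_norm_exp_smul_le_of_ge {n : ℕ} {P : Type*} [Finite P]
    (A : P → Matrix (Fin n) (Fin n) ℝ) {ε : ℝ} (hε : 0 < ε) :
    ∃ τ : ℝ, ∀ t ≥ τ, ∀ q, HurwitzStable (A q) → ‖exp (t • A q)‖ ≤ ε :=
  eventually_atTop.1 <| eventually_all.2 fun _ => eventually_imp_distrib_left.2 fun hq =>
    (tendsto_zero_iff_norm_tendsto_zero.1 hq.tendsto_exp_smul_atTop).eventually (ge_mem_nhds hε)

end Asymptotics

theorem NoDirectedCycle.sub_lt_card {P : Type*} [Fintype P] {E : P → P → Prop}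
    (hE : NoDirectedCycle E) {p : ℕ → P} {a b : ℕ}
    (hp : ∀ k, a ≤ k → k < b → E (p k) (p (k + 1))) : b - a < Fintype.card P := by
  have hpath : ∀ x y, a ≤ x → x ≤ y → y ≤ b → Relation.ReflTransGen E (p x) (p y) :=
    fun x y hax hxy hyb => (reflTransGen_of_succ_of_le (fun i j => E (p i) (p j))
      (fun k hk => hp k (hax.trans hk.1) (hk.2.trans_le hyb)) hxy).lift p fun _ _ => id
  have hne : ∀ x y, a ≤ x → x < y → y ≤ b → p x ≠ p y := fun x y hax hxy hyb hpxy =>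
    hE _ _ (hp x hax (hxy.trans_le hyb)) (hpxy ▸ hpath (x + 1) y (by omega) hxy hyb)
  have hinj : Set.InjOn p (Finset.Icc a b) := by
    intro x hx y hy hxy
    simp only [Finset.coe_Icc, Set.mem_Icc] at hx hy
    by_contra hxy'
    rcases lt_or_gt_of_ne hxy' with hlt | hlt
    exacts [hne x y hx.1 hlt hy.2 hxy, hne y x hy.1 hlt hx.2 hxy.symm]
  have hcard := Finset.card_le_card_of_injOn p (fun _ _ => Finset.mem_coe.2 (Finset.mem_univ _))
    hinj
  have hpos := Fintype.card_pos_iff.2 ⟨p 0⟩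
  rw [Nat.card_Icc, Finset.card_univ] at hcard
  omega

theorem le_pow_of_forall_run_le {y : ℕ → ℝ} {U : ℕ → Prop} {u : ℝ} {N j : ℕ} (hu : 1 ≤ u)
    (h0 : y 0 ≤ 1) (hU : ∀ k < j, U k → y (k + 1) ≤ u * y k)
    (hS : ∀ k < j, ¬ U k → u ^ N * y (k + 1) ≤ y k)
    (hrun : ∀ a b, b ≤ j → (∀ k, a ≤ k → k < b → U k) → b - a ≤ N) : y j ≤ u ^ N := by
  -- `a` marks the start of the run of `U`-steps that ends at step `i`.
  suffices key : ∀ i ≤ j, ∃ a ≤ i, (∀ k, a ≤ k → k < i → U k) ∧ y i ≤ u ^ (i - a) by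
    obtain ⟨a, -, ha, hy⟩ := key j le_rfl
    exact hy.trans (pow_le_pow_right₀ hu (hrun a j le_rfl ha))
  intro i
  induction i with
  | zero => exact fun _ => ⟨0, le_rfl, fun k _ hk => absurd hk k.not_lt_zero, by simpa using h0⟩
  | succ i ih =>
    intro hi
    obtain ⟨a, hai, ha, hy⟩ := ih (by omega)
    by_cases hUi : U i
    · refine ⟨a, by omega, fun k hak hk => ?_, ?_⟩
      · rcases Nat.lt_succ_iff_lt_or_eq.1 hk with hk | rfl
        exacts [ha k hak hk, hUi]
      · calc y (i + 1) ≤ u * y i := hU i hi hUi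
          _ ≤ u * u ^ (i - a) := by gcongr
          _ ≤ u ^ (i + 1 - a) := by
            rw [← pow_succ']; exact pow_le_pow_right₀ hu (by omega)
    · refine ⟨i + 1, le_rfl, fun k hk hk' => absurd hk' (by omega), ?_⟩
      have hyN : y i ≤ u ^ N := hy.trans (pow_le_pow_right₀ hu (hrun a i (by omega) ha))
      rw [Nat.sub_self, pow_zero]
      exact le_of_mul_le_mul_left (by rw [mul_one]; exact (hS i hi hUi).trans hyN)
        (by positivity)

theorem norm_resetTransition_succ_le {n : ℕ} {P : Type*} (A : P → Matrix (Fin n) (Fin n) ℝ)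
    (R : P → P → Matrix (Fin n) (Fin n) ℝ) (p : ℕ → P) (d : ℕ → ℝ) (k : ℕ) :
    ‖resetTransition A R p d (k + 1)‖ ≤
      ‖R (p k) (p (k + 1))‖ * ‖exp (d (k + 1) • A (p k))‖ * ‖resetTransition A R p d k‖ :=
  (norm_mul_le _ _).trans (mul_le_mul_of_nonneg_right (norm_mul_le _ _) (norm_nonneg _))

theorem Matrix.l2_opNorm_one_le {𝕜 m : Type*} [RCLike 𝕜] [Fintype m] [DecidableEq m] :
    ‖(1 : Matrix m m 𝕜)‖ ≤ 1 := by
  rw [Matrix.cstar_norm_def, map_one]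
  exact ContinuousLinearMap.norm_id_le

theorem norm_resetTransition_le_pow_card {n : ℕ} {P : Type*} [Fintype P]
    {A : P → Matrix (Fin n) (Fin n) ℝ} (hP : ∀ p, HurwitzStable (A p) ∨ HasUnstableEigenvalue (A p))
    {E : P → P → Prop} (hEu : NoDirectedCycle (fun p q => E p q ∧ HasUnstableEigenvalue (A p)))
    {R : P → P → Matrix (Fin n) (Fin n) ℝ} {r u τ η : ℝ} (hu : 1 ≤ u) (hR : ∀ p q, ‖R p q‖ ≤ r)
    (hflee : ∀ q, ∀ t ∈ Set.Icc 0 η, r * ‖exp (t • A q)‖ ≤ u)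
    (hdwell : ∀ q, HurwitzStable (A q) → ∀ t ≥ τ, u ^ Fintype.card P * (r * ‖exp (t • A q)‖) ≤ 1)
    {j : ℕ} {p : ℕ → P} {d : ℕ → ℝ}
    (hE : ∀ k, 1 ≤ k → k ≤ j → E (p (k - 1)) (p k))
    (hd : ∀ k, 1 ≤ k → k ≤ j → 0 < d k)
    (hds : ∀ k, 1 ≤ k → k ≤ j → HurwitzStable (A (p (k - 1))) → τ ≤ d k)
    (hdu : ∀ k, 1 ≤ k → k ≤ j → HasUnstableEigenvalue (A (p (k - 1))) → d k ≤ η) :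
    ‖resetTransition A R p d j‖ ≤ u ^ Fintype.card P := by
  have hstep : ∀ k, ‖resetTransition A R p d (k + 1)‖ ≤
      r * ‖exp (d (k + 1) • A (p k))‖ * ‖resetTransition A R p d k‖ := fun k =>
    (norm_resetTransition_succ_le A R p d k).trans (by gcongr; exact hR _ _)
  refine le_pow_of_forall_run_le (y := fun k => ‖resetTransition A R p d k‖)
    (U := fun k => HasUnstableEigenvalue (A (p k))) hu
    Matrix.l2_opNorm_one_le (fun k hk hUk => ?_) (fun k hk hSk => ?_) fun a b hb hrun => ?_
  · have hdk : d (k + 1) ∈ Set.Icc 0 η :=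
      ⟨(hd (k + 1) (by omega) (by omega)).le, hdu (k + 1) (by omega) (by omega) (by simpa)⟩
    exact (hstep k).trans (by gcongr; exact hflee _ _ hdk)
  · have hst := (hP (p k)).resolve_right hSk
    have hdk := hdwell _ hst _ (hds (k + 1) (by omega) (by omega) (by simpa))
    calc u ^ Fintype.card P * ‖resetTransition A R p d (k + 1)‖
        ≤ u ^ Fintype.card P * (r * ‖exp (d (k + 1) • A (p k))‖) * ‖resetTransition A R p d k‖ := by
          rw [mul_assoc _ (r * _)]; gcongr; exact hstep k
      _ ≤ ‖resetTransition A R p d k‖ := mul_le_of_le_one_left (norm_nonneg _) hdk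
  · exact (hEu.sub_lt_card fun k hak hkb =>
      ⟨by simpa using hE (k + 1) (by omega) (by omega), hrun k hak hkb⟩).le

theorem exists_time_constraints_and_resets_from_compact_general {n : ℕ} {P : Type*} [Fintype P]
    (A : P → Matrix (Fin n) (Fin n) ℝ)
    (hP : ∀ p, HurwitzStable (A p) ∨ HasUnstableEigenvalue (A p))
    (E : P → P → Prop)
    (hEu : NoDirectedCycle (fun p q => E p q ∧ HasUnstableEigenvalue (A p)))
    (𝕄 : Set (Matrix (Fin n) (Fin n) ℝ)) (h𝕄ne : 𝕄.Nonempty) (h𝕄 : IsCompact 𝕄) :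
    ∃ τs : ℝ, 0 ≤ τs ∧ ∃ ηs : ℝ, 0 < ηs ∧
      ∃ R : P → P → Matrix (Fin n) (Fin n) ℝ, (∀ p q, E p q → R p q ∈ 𝕄) ∧
      ∃ C > (0 : ℝ), ∀ (j : ℕ) (p : ℕ → P) (d : ℕ → ℝ),
        (∀ k, 1 ≤ k → k ≤ j → E (p (k - 1)) (p k)) →
        (∀ k, 1 ≤ k → k ≤ j → 0 < d k) →
        (∀ k, 1 ≤ k → k ≤ j → HurwitzStable (A (p (k - 1))) → τs ≤ d k) →
        (∀ k, 1 ≤ k → k ≤ j → HasUnstableEigenvalue (A (p (k - 1))) → d k ≤ ηs) →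
        ∀ s : ℝ, 0 ≤ s → (HasUnstableEigenvalue (A (p j)) → s ≤ ηs) →
          ‖exp (s • A (p j)) * resetTransition A R p d j‖ ≤ C := by
  obtain ⟨M₀, hM₀⟩ := h𝕄ne
  obtain ⟨r, hr0, hr⟩ := h𝕄.isBounded.exists_pos_norm_le
  obtain ⟨c, hc⟩ := exists_norm_exp_smul_le A 1
  set u := max (r * c) 1
  have hu : 1 ≤ u := le_max_right _ _
  -- chosen so that a stable step lasting at least the dwell time contracts by `u ^ |P|`
  set ε := (u ^ Fintype.card P * r)⁻¹
  have hε : 0 < ε := by positivity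
  obtain ⟨τ, hτ⟩ := exists_norm_exp_smul_le_of_ge A hε
  obtain ⟨C, hC⟩ := exists_norm_exp_smul_le A (max τ 1)
  refine ⟨max τ 0, le_max_right _ _, 1, one_pos, fun _ _ => M₀, fun _ _ _ => hM₀,
    max C ε * u ^ Fintype.card P, by positivity, fun j p d hE hd hds hdu s hs hsu => ?_⟩
  have hΦ := norm_resetTransition_le_pow_card hP hEu hu (fun _ _ => hr M₀ hM₀)
    (fun q t ht => (mul_le_mul_of_nonneg_left (hc q t ht) hr0.le).trans (le_max_left _ _))
    (fun q hq t ht => by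
      calc u ^ Fintype.card P * (r * ‖exp (t • A q)‖) ≤ u ^ Fintype.card P * (r * ε) := by
            gcongr; exact hτ t (le_of_max_le_left ht) q hq
        _ = 1 := by simp only [ε]; field_simp)
    hE hd hds hdu
  have hlast : ‖exp (s • A (p j))‖ ≤ max C ε := by
    rcases hP (p j) with hst | hun
    · rcases le_total s (max τ 1) with h | h
      · exact (hC _ _ ⟨hs, h⟩).trans (le_max_left _ _)
      · exact (hτ s ((le_max_left _ _).trans h) _ hst).trans (le_max_right _ _)
    · exact (hC _ _ ⟨hs, (hsu hun).trans (le_max_right _ _)⟩).trans (le_max_left _ _)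
  exact norm_mul_le_of_le hlast hΦ

/-- Given a switching graph `E` whose unstable part is acyclic and a nonempty compact set
`𝕄` of nonzero matrices, there are a dwell time `τ* ≥ 0`, a flee time `η* > 0` and resets
chosen from `𝕄` making the reset switched system governed by `E` stable for all
`E`-admissible switching signals with dwell time `τ*` and flee time `η*`. -/
theorem exists_time_constraints_and_resets_from_compact {n : ℕ} {P : Type*} [Fintype P]
    (A : P → Matrix (Fin n) (Fin n) ℝ)
    (hP : ∀ p, HurwitzStable (A p) ∨ HasUnstableEigenvalue (A p))
    (E : P → P → Prop)
    (hEu : NoDirectedCycle (fun p q => E p q ∧ HasUnstableEigenvalue (A p)))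
    (𝕄 : Set (Matrix (Fin n) (Fin n) ℝ)) (h𝕄ne : 𝕄.Nonempty) (h𝕄 : IsCompact 𝕄)
    (h𝕄0 : (0 : Matrix (Fin n) (Fin n) ℝ) ∉ 𝕄) :
    ∃ τs : ℝ, 0 ≤ τs ∧ ∃ ηs : ℝ, 0 < ηs ∧
      ∃ R : P → P → Matrix (Fin n) (Fin n) ℝ, (∀ p q, E p q → R p q ∈ 𝕄) ∧
      ∃ C > (0 : ℝ), ∀ (j : ℕ) (p : ℕ → P) (d : ℕ → ℝ),
        (∀ k, 1 ≤ k → k ≤ j → E (p (k - 1)) (p k)) →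
        (∀ k, 1 ≤ k → k ≤ j → 0 < d k) →
        (∀ k, 1 ≤ k → k ≤ j → HurwitzStable (A (p (k - 1))) → τs ≤ d k) →
        (∀ k, 1 ≤ k → k ≤ j → HasUnstableEigenvalue (A (p (k - 1))) → d k ≤ ηs) →
        ∀ s : ℝ, 0 ≤ s → (HasUnstableEigenvalue (A (p j)) → s ≤ ηs) →
          ‖exp (s • A (p j)) * resetTransition A R p d j‖ ≤ C :=
  exists_time_constraints_and_resets_from_compact_general A hP E hEu 𝕄 h𝕄ne h𝕄
end
end

section
/- Let P be a finite index set and (A_p)_{p∈P} n×n real matrices with P = 𝔰 ∪ 𝔲. Suppose that for each p ∈ P there is a factorization A_p = P_p·J_p·P_p⁻¹ with P_p an invertible n×n complex matrix, together with constants c_p > 0 and rates λ_p > 0 for p ∈ 𝔰 and μ_p > 0 for p ∈ 𝔲 such that ‖exp(t·J_p)‖ ≤ c_p·e^{−λ_p·t} for all t ≥ 0 when p ∈ 𝔰 and ‖exp(t·J_p)‖ ≤ c_p·e^{μ_p·t} for all t ≥ 0 when p ∈ 𝔲. Let E ⊆ P × P be a set of admissible switches containing at least one pair with first coordinate in 𝔰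 and at least one with first coordinate in 𝔲, and let (R_{(p,q)})_{(p,q)∈E} be nonzero n×n real reset matrices. Define τ_R = max{ ln(c_p·‖P_q⁻¹·R_{(p,q)}·P_p‖)/λ_p : (p,q) ∈ E, p ∈ 𝔰 } and η_R = −max{ ln(c_p·‖P_q⁻¹·R_{(p,q)}·P_p‖)/μ_p : (p,q) ∈ E, p ∈ 𝔲 }. Then there exists C > 0 such that for every j ≥ 0, every sequence p_0, …, p_j ∈ P with (p_{k−1},p_k) ∈ E for 1 ≤ k ≤ j, all durations d_1, …, d_j > 0 with d_k ≥ τ_R whenever p_{k−1} ∈ 𝔰 and d_k ≤ η_R whenever p_{k−1} ∈ 𝔲, and every s ≥ 0 with s ≤ η_R whenever p_j ∈ 𝔲, one has ‖exp(s·A_{p_j})·Φ_j‖ ≤ C; that is, the reset switched system governed by the graph E is stable for all E-admissible switching signals with dwell time τ_R and flee time η_R. -/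
/-!
Conjugating by `P_p` turns each flow segment into `exp (d J_p)`, so
`Θ_j = P_{p_j}⁻¹ Φ_j P_{p_0}` is a product of the factors `(P_q⁻¹ R_{(p,q)} P_p) exp (d J_p)`.
By the choice of `τ_R` and `η_R`, each factor has norm at most
`‖P_q⁻¹ R_{(p,q)} P_p‖ c_p e^{-λ_p d} ≤ 1` after a dwell `d ≥ τ_R`, and at most
`‖P_q⁻¹ R_{(p,q)} P_p‖ c_p e^{μ_p d} ≤ 1` after a flee `d ≤ η_R`; hence `‖Θ_j‖ ≤ 1`.
The remaining factors `P_{p_j}`, `exp (s J_{p_j})` and `P_{p_0}⁻¹` take boundedly many values.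
-/

open Matrix NormedSpace
open scoped Matrix.Norms.L2Operator

noncomputable section

namespace Matrix

variable {n : Type*} [Fintype n]

theorem map_ofReal_mul (M N : Matrix n n ℝ) :
    (M * N).map (Complex.ofReal ·) = M.map (Complex.ofReal ·) * N.map (Complex.ofReal ·) :=
  Matrix.map_mul (f := Complex.ofRealHom)

variable [DecidableEq n]

theorem map_ofReal_exp (M : Matrix n n ℝ) :
    (exp M).map (Complex.ofReal ·) = exp (M.map (Complex.ofReal ·)) := by
  -- `exp` only sees the topology, so any norm inducing the product topology can feed `map_exp`.
  let normedRingReal : NormedRing (Matrix n n ℝ) := Matrix.linftyOpNormedRing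
  let : NormedAlgebra ℚ (Matrix n n ℝ) := Matrix.linftyOpNormedAlgebra
  let : NormedRing (Matrix n n ℂ) := Matrix.linftyOpNormedRing
  let : NormedAlgebra ℚ (Matrix n n ℂ) := Matrix.linftyOpNormedAlgebra
  have : @CompleteSpace (Matrix n n ℝ) normedRingReal.toUniformSpace :=
    (inferInstance : CompleteSpace (n → n → ℝ))
  exact map_exp Complex.ofRealHom.mapMatrix
    (continuous_id.matrix_map Complex.continuous_ofReal) M

theorem l2_opNorm_le_l2_opNorm_map_ofReal (M : Matrix n n ℝ) :
    ‖M‖ ≤ ‖M.map (Complex.ofReal ·)‖ := by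
  rw [l2_opNorm_def]
  refine ContinuousLinearMap.opNorm_le_bound _ (norm_nonneg _) fun x => ?_
  set z : EuclideanSpace ℂ n := WithLp.toLp 2 fun i => (x i : ℂ)
  have hz : ‖z‖ = ‖x‖ := by simp [z, EuclideanSpace.norm_eq]
  have hMz : ‖(EuclideanSpace.equiv n ℂ).symm (M.map (Complex.ofReal ·) *ᵥ z)‖ =
      ‖(toEuclideanLin ≪≫ₗ LinearMap.toContinuousLinearMap) M x‖ := by
    simp [z, EuclideanSpace.norm_eq, mulVec, dotProduct, toLpLin_apply, ← Complex.ofReal_mul,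
      ← Complex.ofReal_sum]
  rw [← hMz, ← hz]
  exact l2_opNorm_mulVec _ z

theorem map_ofReal_exp_smul_of_map_ofReal_eq_conj {A : Matrix n n ℝ}
    {S J : Matrix n n ℂ} (hS : IsUnit S) (hA : A.map (Complex.ofReal ·) = S * J * S⁻¹)
    (t : ℝ) : (exp (t • A)).map (Complex.ofReal ·) = S * exp ((t : ℂ) • J) * S⁻¹ := by
  have hsmul : (t • A).map (Complex.ofReal ·) = (t : ℂ) • A.map (Complex.ofReal ·) := by
    ext; simp
  rw [map_ofReal_exp, hsmul, hA, ← exp_conj S _ hS, mul_smul_comm, smul_mul_assoc]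

end Matrix

theorem mul_le_one_of_log_mul_le {b c r x : ℝ} (hb : 0 ≤ b) (hc : 0 < c)
    (hlog : Real.log (c * b) ≤ r) (hx : x ≤ c * Real.exp (-r)) : b * x ≤ 1 := by
  rcases hb.eq_or_lt with rfl | hb
  · simp
  have hcb : c * b ≤ Real.exp r := by
    rw [← Real.exp_log (mul_pos hc hb)]
    exact Real.exp_le_exp.2 hlog
  calc b * x ≤ b * (c * Real.exp (-r)) := mul_le_mul_of_nonneg_left hx hb.le
    _ = c * b * Real.exp (-r) := by ring
    _ ≤ Real.exp r * Real.exp (-r) := by gcongr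
    _ = 1 := by rw [← Real.exp_add, add_neg_cancel, Real.exp_zero]

theorem mul_le_one_of_dwell {b c lam τ d x : ℝ} (hb : 0 ≤ b) (hc : 0 < c) (hlam : 0 < lam)
    (hτ : Real.log (c * b) / lam ≤ τ) (hd : τ ≤ d) (hx : x ≤ c * Real.exp (-lam * d)) :
    b * x ≤ 1 := by
  refine mul_le_one_of_log_mul_le hb hc ?_ (by rwa [neg_mul] at hx)
  rw [div_le_iff₀ hlam] at hτ
  nlinarith

theorem mul_le_one_of_flee {b c mu η d x : ℝ} (hb : 0 ≤ b) (hc : 0 < c) (hmu : 0 < mu)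
    (hη : Real.log (c * b) / mu ≤ -η) (hd : d ≤ η) (hx : x ≤ c * Real.exp (mu * d)) :
    b * x ≤ 1 := by
  refine mul_le_one_of_log_mul_le hb hc ?_ (by rwa [neg_neg])
  rw [div_le_iff₀ hmu] at hη
  nlinarith

section ResetTransition

variable {n : ℕ} {P : Type*} {A : P → Matrix (Fin n) (Fin n) ℝ}
  {Pm J : P → Matrix (Fin n) (Fin n) ℂ} {R : P → P → Matrix (Fin n) (Fin n) ℝ} {p : ℕ → P}
  {d : ℕ → ℝ}

theorem conj_resetTransition_succ (hPm : ∀ q, IsUnit (Pm q))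
    (hfact : ∀ q, (A q).map (Complex.ofReal ·) = Pm q * J q * (Pm q)⁻¹) (j : ℕ) :
    (Pm (p (j + 1)))⁻¹ * (resetTransition A R p d (j + 1)).map (Complex.ofReal ·) * Pm (p 0) =
      (Pm (p (j + 1)))⁻¹ * (R (p j) (p (j + 1))).map (Complex.ofReal ·) * Pm (p j) *
        exp ((d (j + 1) : ℂ) • J (p j)) *
        ((Pm (p j))⁻¹ * (resetTransition A R p d j).map (Complex.ofReal ·) * Pm (p 0)) := by
  rw [resetTransition, map_ofReal_mul, map_ofReal_mul,
    map_ofReal_exp_smul_of_map_ofReal_eq_conj (hPm _) (hfact _)]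
  simp only [mul_assoc]

theorem norm_conj_resetTransition_le_one (hPm : ∀ q, IsUnit (Pm q))
    (hfact : ∀ q, (A q).map (Complex.ofReal ·) = Pm q * J q * (Pm q)⁻¹) {j : ℕ}
    (hstep : ∀ k, 1 ≤ k → k ≤ j →
      ‖(Pm (p k))⁻¹ * (R (p (k - 1)) (p k)).map (Complex.ofReal ·) * Pm (p (k - 1))‖ *
        ‖exp ((d k : ℂ) • J (p (k - 1)))‖ ≤ 1) :
    ‖(Pm (p j))⁻¹ * (resetTransition A R p d j).map (Complex.ofReal ·) * Pm (p 0)‖ ≤ 1 := by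
  induction j with
  | zero =>
    rw [resetTransition, Matrix.map_one _ Complex.ofReal_zero Complex.ofReal_one, mul_one,
      nonsing_inv_mul _ ((isUnit_iff_isUnit_det _).1 (hPm _)), cstar_norm_def, map_one]
    exact ContinuousLinearMap.norm_id_le
  | succ j ih =>
    have hstep_succ := hstep (j + 1) le_add_self le_rfl
    rw [Nat.add_sub_cancel] at hstep_succ
    rw [conj_resetTransition_succ hPm hfact]
    exact norm_mul₃_le.trans <| mul_le_one₀ hstep_succ (norm_nonneg _) <|
      ih fun k hk hkj => hstep k hk (hkj.trans j.le_succ)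

theorem norm_exp_smul_mul_resetTransition_le (hPm : ∀ q, IsUnit (Pm q))
    (hfact : ∀ q, (A q).map (Complex.ofReal ·) = Pm q * J q * (Pm q)⁻¹) {j : ℕ}
    (hstep : ∀ k, 1 ≤ k → k ≤ j →
      ‖(Pm (p k))⁻¹ * (R (p (k - 1)) (p k)).map (Complex.ofReal ·) * Pm (p (k - 1))‖ *
        ‖exp ((d k : ℂ) • J (p (k - 1)))‖ ≤ 1) (s : ℝ) :
    ‖exp (s • A (p j)) * resetTransition A R p d j‖ ≤
      ‖Pm (p j)‖ * ‖exp ((s : ℂ) • J (p j))‖ * ‖(Pm (p 0))⁻¹‖ := by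
  set Θ := (Pm (p j))⁻¹ * (resetTransition A R p d j).map (Complex.ofReal ·) * Pm (p 0)
  have hconj : (exp (s • A (p j)) * resetTransition A R p d j).map (Complex.ofReal ·) =
      Pm (p j) * exp ((s : ℂ) • J (p j)) * Θ * (Pm (p 0))⁻¹ := by
    rw [map_ofReal_mul, map_ofReal_exp_smul_of_map_ofReal_eq_conj (hPm _) (hfact _)]
    simp only [Θ, mul_assoc, mul_nonsing_inv _ ((isUnit_iff_isUnit_det _).1 (hPm (p 0))), mul_one]
  calc ‖exp (s • A (p j)) * resetTransition A R p d j‖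
      ≤ ‖(exp (s • A (p j)) * resetTransition A R p d j).map (Complex.ofReal ·)‖ :=
        l2_opNorm_le_l2_opNorm_map_ofReal _
    _ ≤ ‖Pm (p j) * exp ((s : ℂ) • J (p j))‖ * ‖Θ‖ * ‖(Pm (p 0))⁻¹‖ := hconj ▸ norm_mul₃_le
    _ ≤ ‖Pm (p j)‖ * ‖exp ((s : ℂ) • J (p j))‖ * 1 * ‖(Pm (p 0))⁻¹‖ := by
        gcongr
        · exact norm_mul_le _ _
        · exact norm_conj_resetTransition_le_one hPm hfact hstep
    _ = ‖Pm (p j)‖ * ‖exp ((s : ℂ) • J (p j))‖ * ‖(Pm (p 0))⁻¹‖ := by rw [mul_one]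

end ResetTransition

theorem reset_system_stable_of_dwell_flee_general {n : ℕ} {P : Type*} [Fintype P]
    (A : P → Matrix (Fin n) (Fin n) ℝ)
    (hP : ∀ p, HurwitzStable (A p) ∨ HasUnstableEigenvalue (A p))
    (Pm J : P → Matrix (Fin n) (Fin n) ℂ)
    (hPm : ∀ p, IsUnit (Pm p))
    (hfact : ∀ p, (A p).map (Complex.ofReal ·) = Pm p * J p * (Pm p)⁻¹)
    (c lam mu : P → ℝ) (hc : ∀ p, 0 < c p)
    (hlam : ∀ p, HurwitzStable (A p) → 0 < lam p)
    (hmu : ∀ p, HasUnstableEigenvalue (A p) → 0 < mu p)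
    (hJs : ∀ p, HurwitzStable (A p) → ∀ t : ℝ, 0 ≤ t →
      ‖exp ((t : ℂ) • J p)‖ ≤ c p * Real.exp (-(lam p) * t))
    (hJu : ∀ p, HasUnstableEigenvalue (A p) → ∀ t : ℝ, 0 ≤ t →
      ‖exp ((t : ℂ) • J p)‖ ≤ c p * Real.exp (mu p * t))
    (E : P → P → Prop)
    (R : P → P → Matrix (Fin n) (Fin n) ℝ)
    (τR ηR : ℝ)
    (hτR_ub : ∀ p q, E p q → HurwitzStable (A p) →
      Real.log (c p * ‖(Pm q)⁻¹ * (R p q).map (Complex.ofReal ·) * Pm p‖) / lam p ≤ τR)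
    (hηR_ub : ∀ p q, E p q → HasUnstableEigenvalue (A p) →
      Real.log (c p * ‖(Pm q)⁻¹ * (R p q).map (Complex.ofReal ·) * Pm p‖) / mu p ≤ -ηR) :
    ∃ C > (0 : ℝ), ∀ (j : ℕ) (p : ℕ → P) (d : ℕ → ℝ),
      (∀ k, 1 ≤ k → k ≤ j → E (p (k - 1)) (p k)) →
      (∀ k, 1 ≤ k → k ≤ j → 0 < d k) →
      (∀ k, 1 ≤ k → k ≤ j → HurwitzStable (A (p (k - 1))) → τR ≤ d k) →
      (∀ k, 1 ≤ k → k ≤ j → HasUnstableEigenvalue (A (p (k - 1))) → d k ≤ ηR) →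
      ∀ s : ℝ, 0 ≤ s → (HasUnstableEigenvalue (A (p j)) → s ≤ ηR) →
        ‖exp (s • A (p j)) * resetTransition A R p d j‖ ≤ C := by
  set D : P → ℝ := fun q => c q * max 1 (Real.exp (mu q * ηR))
  obtain ⟨C, hC⟩ := Finite.exists_le fun ab : P × P => ‖Pm ab.1‖ * D ab.1 * ‖(Pm ab.2)⁻¹‖
  refine ⟨max C 1, by positivity, fun j p d hE hd hτ hη s hs hsη => ?_⟩
  have hstep : ∀ k, 1 ≤ k → k ≤ j →
      ‖(Pm (p k))⁻¹ * (R (p (k - 1)) (p k)).map (Complex.ofReal ·) * Pm (p (k - 1))‖ *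
        ‖exp ((d k : ℂ) • J (p (k - 1)))‖ ≤ 1 := by
    intro k hk hkj
    rcases hP (p (k - 1)) with hst | hun
    · exact mul_le_one_of_dwell (norm_nonneg _) (hc _) (hlam _ hst)
        (hτR_ub _ _ (hE k hk hkj) hst) (hτ k hk hkj hst) (hJs _ hst _ (hd k hk hkj).le)
    · exact mul_le_one_of_flee (norm_nonneg _) (hc _) (hmu _ hun)
        (hηR_ub _ _ (hE k hk hkj) hun) (hη k hk hkj hun) (hJu _ hun _ (hd k hk hkj).le)
  have hlast : ‖exp ((s : ℂ) • J (p j))‖ ≤ D (p j) := by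
    rcases hP (p j) with hst | hun
    · refine (hJs _ hst s hs).trans (mul_le_mul_of_nonneg_left (le_max_of_le_left ?_) (hc _).le)
      exact Real.exp_le_one_iff.2 (by nlinarith [hlam _ hst])
    · refine (hJu _ hun s hs).trans (mul_le_mul_of_nonneg_left (le_max_of_le_right ?_) (hc _).le)
      exact Real.exp_le_exp.2 (mul_le_mul_of_nonneg_left (hsη hun) (hmu _ hun).le)
  calc ‖exp (s • A (p j)) * resetTransition A R p d j‖
      ≤ ‖Pm (p j)‖ * ‖exp ((s : ℂ) • J (p j))‖ * ‖(Pm (p 0))⁻¹‖ :=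
        norm_exp_smul_mul_resetTransition_le hPm hfact hstep s
    _ ≤ ‖Pm (p j)‖ * D (p j) * ‖(Pm (p 0))⁻¹‖ := by gcongr
    _ ≤ max C 1 := (hC (p j, p 0)).trans (le_max_left _ _)

/-- Dwell time and flee time computed from Jordan-type factorizations `A_p = P_p J_p P_p⁻¹`
stabilize the reset switched system governed by a graph `E`: with
`τ_R = max{ ln(c_p ‖P_q⁻¹ R_{(p,q)} P_p‖)/λ_p : (p,q) ∈ E, p stable }` and
`η_R = −max{ ln(c_p ‖P_q⁻¹ R_{(p,q)} P_p‖)/μ_p : (p,q) ∈ E, p unstable }` (each maximum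
expressed as an upper bound that is attained), the system is stable for all `E`-admissible
signals with dwell time `τ_R` and flee time `η_R`. -/
theorem reset_system_stable_of_dwell_flee {n : ℕ} {P : Type*} [Fintype P]
    (A : P → Matrix (Fin n) (Fin n) ℝ)
    (hP : ∀ p, HurwitzStable (A p) ∨ HasUnstableEigenvalue (A p))
    (Pm J : P → Matrix (Fin n) (Fin n) ℂ)
    (hPm : ∀ p, IsUnit (Pm p))
    (hfact : ∀ p, (A p).map (Complex.ofReal ·) = Pm p * J p * (Pm p)⁻¹)
    (c lam mu : P → ℝ) (hc : ∀ p, 0 < c p)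
    (hlam : ∀ p, HurwitzStable (A p) → 0 < lam p)
    (hmu : ∀ p, HasUnstableEigenvalue (A p) → 0 < mu p)
    (hJs : ∀ p, HurwitzStable (A p) → ∀ t : ℝ, 0 ≤ t →
      ‖exp ((t : ℂ) • J p)‖ ≤ c p * Real.exp (-(lam p) * t))
    (hJu : ∀ p, HasUnstableEigenvalue (A p) → ∀ t : ℝ, 0 ≤ t →
      ‖exp ((t : ℂ) • J p)‖ ≤ c p * Real.exp (mu p * t))
    (E : P → P → Prop)
    (hEs : ∃ p q, E p q ∧ HurwitzStable (A p))
    (hEu : ∃ p q, E p q ∧ HasUnstableEigenvalue (A p))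
    (R : P → P → Matrix (Fin n) (Fin n) ℝ) (hR : ∀ p q, E p q → R p q ≠ 0)
    (τR ηR : ℝ)
    (hτR_ub : ∀ p q, E p q → HurwitzStable (A p) →
      Real.log (c p * ‖(Pm q)⁻¹ * (R p q).map (Complex.ofReal ·) * Pm p‖) / lam p ≤ τR)
    (hτR_mem : ∃ p q, E p q ∧ HurwitzStable (A p) ∧
      τR = Real.log (c p * ‖(Pm q)⁻¹ * (R p q).map (Complex.ofReal ·) * Pm p‖) / lam p)
    (hηR_ub : ∀ p q, E p q → HasUnstableEigenvalue (A p) →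
      Real.log (c p * ‖(Pm q)⁻¹ * (R p q).map (Complex.ofReal ·) * Pm p‖) / mu p ≤ -ηR)
    (hηR_mem : ∃ p q, E p q ∧ HasUnstableEigenvalue (A p) ∧
      -ηR = Real.log (c p * ‖(Pm q)⁻¹ * (R p q).map (Complex.ofReal ·) * Pm p‖) / mu p) :
    ∃ C > (0 : ℝ), ∀ (j : ℕ) (p : ℕ → P) (d : ℕ → ℝ),
      (∀ k, 1 ≤ k → k ≤ j → E (p (k - 1)) (p k)) →
      (∀ k, 1 ≤ k → k ≤ j → 0 < d k) →
      (∀ k, 1 ≤ k → k ≤ j → HurwitzStable (A (p (k - 1))) → τR ≤ d k) →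
      (∀ k, 1 ≤ k → k ≤ j → HasUnstableEigenvalue (A (p (k - 1))) → d k ≤ ηR) →
      ∀ s : ℝ, 0 ≤ s → (HasUnstableEigenvalue (A (p j)) → s ≤ ηR) →
        ‖exp (s • A (p j)) * resetTransition A R p d j‖ ≤ C :=
  reset_system_stable_of_dwell_flee_general A hP Pm J hPm hfact c lam mu hc hlam hmu hJs hJu E R τR
    ηR hτR_ub hηR_ub
end
end

section
/- Let P be a finite index set, (A_p)_{p∈P} a family of n×n real matrices, and (R_{(p,q)})_{p,q∈P} reset matrices. Suppose that for some τ > 0 there exists a collection of symmetric positive definite matrices (Q_p)_{p∈P} such that Q_p·A_p + A_pᵀ·Q_p is negative definite for all p ∈ P, and exp(τ·A_q)ᵀ·R_{(q,p)}ᵀ·Q_p·R_{(q,p)}·exp(τ·A_q) ⪯ Q_q for all p, q ∈ P. Then there exists C > 0 such that for every j ≥ 0, every switching sequence p_0, …, p_j ∈ P, all durations d_1, …, d_j ≥ τ, and every s ≥ 0, one has ‖exp(s·A_{p_j})·Φ_j‖ ≤ C; that is, the reset switched system is stable for every switching signal with dwell time τ. -/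
open Matrix NormedSpace
open scoped Matrix.Norms.L2Operator

noncomputable section

/-! Each `Q_p` is a Lyapunov function of `ẋ = A_p x`, so `Q_p` dominates its conjugate by any
forward flow of mode `p` (a derivative argument on the quadratic forms). Splitting a flow of length
`d ≥ τ` into pieces of lengths `τ` and `d - τ`, the LMI extends to every duration `d ≥ τ`, and
chaining it along the switching sequence gives `Gᵀ Q_{p_j} G ⪯ Q_{p_0}` for
`G = exp(s A_{p_j}) Φ_j`. Squeezing all `Q_p` between `a • 1` and `b • 1` with `a > 0` then yields
`‖G‖² ≤ b / a`. -/

open Filter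
open scoped MatrixOrder Topology

namespace Matrix

variable {n : Type*} [Fintype n]

theorem dotProduct_mulVec_le_of_le {M N : Matrix n n ℝ} (h : M ≤ N) (x : n → ℝ) :
    x ⬝ᵥ M *ᵥ x ≤ x ⬝ᵥ N *ᵥ x := by
  simpa only [star_trivial, sub_mulVec, dotProduct_sub, sub_nonneg] using
    (le_iff.1 h).dotProduct_mulVec_nonneg x

theorem le_of_forall_dotProduct_mulVec_le {M N : Matrix n n ℝ} (hM : M.IsHermitian)
    (hN : N.IsHermitian) (h : ∀ x, x ⬝ᵥ M *ᵥ x ≤ x ⬝ᵥ N *ᵥ x) : M ≤ N :=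
  le_iff.2 <| .of_dotProduct_mulVec_nonneg (hN.sub hM) fun x => by
    simpa only [star_trivial, sub_mulVec, dotProduct_sub, sub_nonneg] using h x

theorem transpose_left_conjugate_le_conjugate {X Y : Matrix n n ℝ} (h : X ≤ Y) (C : Matrix n n ℝ) :
    Cᵀ * X * C ≤ Cᵀ * Y * C := by
  simpa only [star_eq_conjTranspose, conjTranspose_eq_transpose_of_trivial] using
    star_left_conjugate_le_conjugate h C

variable [DecidableEq n]

theorem antitone_of_hasDerivAt_nonpos {F F' : ℝ → Matrix n n ℝ} (hF : ∀ u, (F u).IsHermitian)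
    (hderiv : ∀ u, HasDerivAt F (F' u) u) (hF' : ∀ u, F' u ≤ 0) : Antitone F := by
  intro u v huv
  refine le_of_forall_dotProduct_mulVec_le (hF v) (hF u) fun x => ?_
  let q : Matrix n n ℝ →L[ℝ] ℝ := LinearMap.toContinuousLinearMap
    { toFun := fun M => x ⬝ᵥ M *ᵥ x
      map_add' := fun M N => by simp only [add_mulVec, dotProduct_add]
      map_smul' := fun c M => by simp only [smul_mulVec, dotProduct_smul, RingHom.id_apply] }
  refine _root_.antitone_of_hasDerivAt_nonpos
    (fun u => q.hasFDerivAt.comp_hasDerivAt (f := F) u (hderiv u)) (fun u => ?_) huv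
  exact (dotProduct_mulVec_le_of_le (hF' u) x).trans_eq (by simp)

theorem transpose_exp_smul_mul_mul_exp_smul_le {A Q : Matrix n n ℝ} (hQ : Q.IsHermitian)
    (hQA : Q * A + Aᵀ * Q ≤ 0) {s : ℝ} (hs : 0 ≤ s) :
    (exp (s • A))ᵀ * Q * exp (s • A) ≤ Q := by
  have hF : ∀ u : ℝ, HasDerivAt (fun u : ℝ => (exp (u • A))ᵀ * Q * exp (u • A))
      ((exp (u • A))ᵀ * (Q * A + Aᵀ * Q) * exp (u • A)) u := by
    intro u
    have h := ((hasDerivAt_exp_smul_const (𝕂 := ℝ) Aᵀ u).mul_const Q).mul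
      (hasDerivAt_exp_smul_const' (𝕂 := ℝ) A u)
    simp only [← transpose_smul, exp_transpose] at h
    exact h.congr_deriv (by noncomm_ring)
  have hanti := antitone_of_hasDerivAt_nonpos
    (fun u => by
      simpa only [conjTranspose_eq_transpose_of_trivial] using
        isHermitian_conjTranspose_mul_mul (exp (u • A)) hQ) hF
    (fun u => by simpa using transpose_left_conjugate_le_conjugate hQA (exp (u • A)))
  simpa using hanti hs

theorem transpose_exp_smul_mul_mul_exp_smul_le_of_le {A Q M : Matrix n n ℝ} (hQ : Q.IsHermitian)
    (hQA : Q * A + Aᵀ * Q ≤ 0) {τ d : ℝ} (hM : (exp (τ • A))ᵀ * M * exp (τ • A) ≤ Q)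
    (hd : τ ≤ d) : (exp (d • A))ᵀ * M * exp (d • A) ≤ Q := by
  have hsplit : exp (d • A) = exp (τ • A) * exp ((d - τ) • A) := by
    rw [← exp_add_of_commute _ _ (((Commute.refl A).smul_left _).smul_right _), ← add_smul,
      add_sub_cancel]
  calc (exp (d • A))ᵀ * M * exp (d • A)
      = (exp ((d - τ) • A))ᵀ * ((exp (τ • A))ᵀ * M * exp (τ • A)) * exp ((d - τ) • A) := by
        simp only [hsplit, transpose_mul, Matrix.mul_assoc]
    _ ≤ (exp ((d - τ) • A))ᵀ * Q * exp ((d - τ) • A) :=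
        transpose_left_conjugate_le_conjugate hM _
    _ ≤ Q := transpose_exp_smul_mul_mul_exp_smul_le hQ hQA (sub_nonneg.2 hd)

theorem exists_pos_smul_one_le {Q : Matrix n n ℝ} (hQ : Q.PosDef) :
    ∃ a : ℝ, 0 < a ∧ a • 1 ≤ Q := by
  cases subsingleton_or_nontrivial (Matrix n n ℝ)
  · exact ⟨1, one_pos, (Subsingleton.elim _ _).le⟩
  · simpa only [Algebra.algebraMap_eq_smul_one] using
      (CFC.exists_pos_algebraMap_le_iff hQ.isHermitian.isSelfAdjoint).2
        fun _ => hQ.isStrictlyPositive.spectrum_pos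

theorem eventually_smul_one_le {Q : Matrix n n ℝ} (hQ : Q.PosDef) :
    ∀ᶠ a in 𝓝[>] (0 : ℝ), a • 1 ≤ Q := by
  obtain ⟨a, ha, haQ⟩ := exists_pos_smul_one_le hQ
  filter_upwards [Ioc_mem_nhdsGT ha] with b hb
  exact (smul_le_smul_of_nonneg_right hb.2 PosSemidef.one.nonneg).trans haQ

theorem eventually_le_smul_one {Q : Matrix n n ℝ} (hQ : Q.IsHermitian) :
    ∀ᶠ b : ℝ in atTop, Q ≤ b • 1 := by
  obtain ⟨b, hb⟩ := (spectrum.isCompact (𝕜 := ℝ) Q).bddAbove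
  filter_upwards [eventually_ge_atTop b] with c hc
  simpa only [Algebra.algebraMap_eq_smul_one] using
    le_algebraMap_of_spectrum_le (fun x hx => (hb hx).trans hc) hQ.isSelfAdjoint

theorem norm_le_sqrt_of_transpose_mul_self_le {G : Matrix n n ℝ} {c : ℝ}
    (h : Gᵀ * G ≤ c • 1) : ‖G‖ ≤ √c := by
  rw [cstar_norm_def]
  refine ContinuousLinearMap.opNorm_le_bound _ (Real.sqrt_nonneg c) fun v => ?_
  have hv : ‖toEuclideanCLM (𝕜 := ℝ) G v‖ ^ 2 ≤ c * ‖v‖ ^ 2 := by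
    simp only [← real_inner_self_eq_norm_sq, EuclideanSpace.inner_eq_star_dotProduct,
      ofLp_toEuclideanCLM, star_trivial]
    simpa only [← mulVec_mulVec, dotProduct_mulVec _ _ (G *ᵥ _), vecMul_transpose, smul_mulVec,
      one_mulVec, dotProduct_smul, smul_eq_mul] using dotProduct_mulVec_le_of_le h v.ofLp
  rw [← Real.sqrt_sq (norm_nonneg v), ← Real.sqrt_mul' _ (sq_nonneg _)]
  exact Real.le_sqrt_of_sq_le hv

theorem norm_le_sqrt_div_of_transpose_mul_mul_le {G Q : Matrix n n ℝ} {a b : ℝ} (ha : 0 < a)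
    (hQ : a • 1 ≤ Q) (h : Gᵀ * Q * G ≤ b • 1) : ‖G‖ ≤ √(b / a) := by
  have hG : a • (Gᵀ * G) ≤ b • 1 :=
    calc a • (Gᵀ * G) = Gᵀ * (a • 1) * G := by simp
      _ ≤ Gᵀ * Q * G := transpose_left_conjugate_le_conjugate hQ G
      _ ≤ b • 1 := h
  refine norm_le_sqrt_of_transpose_mul_self_le ?_
  simpa [smul_smul, ha.ne', div_eq_inv_mul] using
    smul_le_smul_of_nonneg_left hG (inv_nonneg.2 ha.le)

end Matrix

section ResetTransition

variable {n : ℕ} {P : Type*} {A : P → Matrix (Fin n) (Fin n) ℝ}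
  {R : P → P → Matrix (Fin n) (Fin n) ℝ} {Q : P → Matrix (Fin n) (Fin n) ℝ} {p : ℕ → P}
  {d : ℕ → ℝ} {j : ℕ}

theorem transpose_resetTransition_mul_mul_le
    (hjump : ∀ k < j, (exp (d (k + 1) • A (p k)))ᵀ * (R (p k) (p (k + 1)))ᵀ * Q (p (k + 1)) *
      R (p k) (p (k + 1)) * exp (d (k + 1) • A (p k)) ≤ Q (p k)) :
    (resetTransition A R p d j)ᵀ * Q (p j) * resetTransition A R p d j ≤ Q (p 0) := by
  induction j with
  | zero => simp [resetTransition]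
  | succ j ih =>
    calc (resetTransition A R p d (j + 1))ᵀ * Q (p (j + 1)) * resetTransition A R p d (j + 1)
        = (resetTransition A R p d j)ᵀ * ((exp (d (j + 1) • A (p j)))ᵀ *
            (R (p j) (p (j + 1)))ᵀ * Q (p (j + 1)) * R (p j) (p (j + 1)) *
            exp (d (j + 1) • A (p j))) * resetTransition A R p d j := by
          simp only [resetTransition, transpose_mul, Matrix.mul_assoc]
      _ ≤ (resetTransition A R p d j)ᵀ * Q (p j) * resetTransition A R p d j :=
          transpose_left_conjugate_le_conjugate (hjump j j.lt_succ_self) _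
      _ ≤ Q (p 0) := ih fun k hk => hjump k (hk.trans j.lt_succ_self)

theorem transpose_exp_mul_resetTransition_mul_mul_le (hQ : (Q (p j)).IsHermitian)
    (hQA : Q (p j) * A (p j) + (A (p j))ᵀ * Q (p j) ≤ 0)
    (hjump : ∀ k < j, (exp (d (k + 1) • A (p k)))ᵀ * (R (p k) (p (k + 1)))ᵀ * Q (p (k + 1)) *
      R (p k) (p (k + 1)) * exp (d (k + 1) • A (p k)) ≤ Q (p k)) {s : ℝ} (hs : 0 ≤ s) :
    (exp (s • A (p j)) * resetTransition A R p d j)ᵀ * Q (p j) *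
      (exp (s • A (p j)) * resetTransition A R p d j) ≤ Q (p 0) :=
  calc (exp (s • A (p j)) * resetTransition A R p d j)ᵀ * Q (p j) *
        (exp (s • A (p j)) * resetTransition A R p d j)
      = (resetTransition A R p d j)ᵀ * ((exp (s • A (p j)))ᵀ * Q (p j) * exp (s • A (p j))) *
          resetTransition A R p d j := by
        simp only [transpose_mul, Matrix.mul_assoc]
    _ ≤ (resetTransition A R p d j)ᵀ * Q (p j) * resetTransition A R p d j :=
        transpose_left_conjugate_le_conjugate (transpose_exp_smul_mul_mul_exp_smul_le hQ hQA hs) _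
    _ ≤ Q (p 0) := transpose_resetTransition_mul_mul_le hjump

end ResetTransition

theorem reset_system_stable_of_MLF_dwell_general {n : ℕ} {P : Type*} [Fintype P]
    (A : P → Matrix (Fin n) (Fin n) ℝ)
    (R : P → P → Matrix (Fin n) (Fin n) ℝ)
    (τ : ℝ)
    (Q : P → Matrix (Fin n) (Fin n) ℝ)
    (hQ : ∀ p, (Q p).PosDef)
    (hQA : ∀ p, (-(Q p * A p + (A p)ᵀ * Q p)).PosDef)
    (hLMI : ∀ p q, (Q q -
      (exp (τ • A q))ᵀ * (R q p)ᵀ * Q p * R q p * exp (τ • A q)).PosSemidef) :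
    ∃ C > (0 : ℝ), ∀ (j : ℕ) (p : ℕ → P) (d : ℕ → ℝ),
      (∀ k, 1 ≤ k → k ≤ j → τ ≤ d k) →
      ∀ s : ℝ, 0 ≤ s →
        ‖exp (s • A (p j)) * resetTransition A R p d j‖ ≤ C := by
  have hQA' : ∀ p, Q p * A p + (A p)ᵀ * Q p ≤ 0 := fun p =>
    le_iff.2 <| by simpa only [zero_sub] using (hQA p).posSemidef
  have hjump : ∀ q p (t : ℝ), τ ≤ t →
      (exp (t • A q))ᵀ * (R q p)ᵀ * Q p * R q p * exp (t • A q) ≤ Q q := fun q p t ht => by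
    have hLMI' : (exp (τ • A q))ᵀ * ((R q p)ᵀ * Q p * R q p) * exp (τ • A q) ≤ Q q := by
      simpa only [Matrix.mul_assoc] using le_iff.2 (hLMI p q)
    simpa only [Matrix.mul_assoc] using
      transpose_exp_smul_mul_mul_exp_smul_le_of_le (hQ q).isHermitian (hQA' q) hLMI' ht
  obtain ⟨a, hQa, ha⟩ :=
    ((eventually_all.2 fun p => eventually_smul_one_le (hQ p)).and self_mem_nhdsWithin).exists
  obtain ⟨b, hQb⟩ := (eventually_all.2 fun p => eventually_le_smul_one (hQ p).isHermitian).exists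
  refine ⟨√(b / a) + 1, by positivity, fun j p d hd s hs => ?_⟩
  exact (norm_le_sqrt_div_of_transpose_mul_mul_le ha (hQa (p j))
    ((transpose_exp_mul_resetTransition_mul_mul_le (hQ (p j)).isHermitian (hQA' (p j))
      (fun k hk => hjump _ _ _ (hd (k + 1) le_add_self hk)) hs).trans (hQb (p 0)))).trans
    (le_add_of_nonneg_right zero_le_one)

/-- Multiple-Lyapunov-function dwell time criterion for reset switched systems: if there are
symmetric positive definite `Q_p` with `Q_p A_p + A_pᵀ Q_p` negative definite and
`exp(τ A_q)ᵀ R_{(q,p)}ᵀ Q_p R_{(q,p)} exp(τ A_q) ⪯ Q_q` for all `p, q`, then the reset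
switched system is stable for every switching signal with dwell time `τ`. -/
theorem reset_system_stable_of_MLF_dwell {n : ℕ} {P : Type*} [Fintype P]
    (A : P → Matrix (Fin n) (Fin n) ℝ)
    (R : P → P → Matrix (Fin n) (Fin n) ℝ)
    (τ : ℝ) (hτ : 0 < τ)
    (Q : P → Matrix (Fin n) (Fin n) ℝ)
    (hQ : ∀ p, (Q p).PosDef)
    (hQA : ∀ p, (-(Q p * A p + (A p)ᵀ * Q p)).PosDef)
    (hLMI : ∀ p q, (Q q -
      (exp (τ • A q))ᵀ * (R q p)ᵀ * Q p * R q p * exp (τ • A q)).PosSemidef) :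
    ∃ C > (0 : ℝ), ∀ (j : ℕ) (p : ℕ → P) (d : ℕ → ℝ),
      (∀ k, 1 ≤ k → k ≤ j → τ ≤ d k) →
      ∀ s : ℝ, 0 ≤ s →
        ‖exp (s • A (p j)) * resetTransition A R p d j‖ ≤ C :=
  reset_system_stable_of_MLF_dwell_general A R τ Q hQ hQA hLMI
end
end

section
/- Let P be a finite index set partitioned into nonempty sets 𝔰 and 𝔲 (the indices of the stable and unstable subsystems), let (A_p)_{p∈P} be n×n real matrices and (R_{(p,q)})_{p,q∈P} reset matrices. Suppose there exist symmetric positive definite matrices (Q_p)_{p∈P} and positive constants λ_p (p ∈ 𝔰), μ_p (p ∈ 𝔲), and γ_{(p,q)} (p,q ∈ P) such that Q_p·A_p + A_pᵀ·Q_p ⪯ −λ_p·Q_p for all p ∈ 𝔰, Q_p·A_p + A_pᵀ·Q_p ⪯ μ_p·Q_p for all p ∈ 𝔲, and R_{(p,q)}ᵀ·Q_q·R_{(p,q)} ⪯ γ_{(p,q)}·Q_p for all p, q ∈ P. Set λ = min_{p∈𝔰} λ_p, μ = max_{p∈𝔲} μ_p and γ = max_{p,q∈P} γ_{(p,q)}.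 Let τ, η > 0, let p : ℕ → P be an infinite switching sequence and d_1, d_2, … positive durations with d_k ≥ τ whenever p_{k−1} ∈ 𝔰 and d_k ≤ η whenever p_{k−1} ∈ 𝔲, and set N_s(j) = #{0 ≤ i < j : p_i ∈ 𝔰} and N_u(j) = #{0 ≤ i < j : p_i ∈ 𝔲}. If limsup_{j→∞} ( −λ·N_s(j)·τ + μ·N_u(j)·η + j·ln γ ) < 0, then there exists C > 0 such that ‖exp(s·A_{p_j})·Φ_j‖ ≤ C for every j ≥ 0 and every s with 0 ≤ s ≤ d_{j+1}; that is, the reset switched system is stable along this switching signal. -/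
open Matrix NormedSpace
open scoped Matrix.Norms.L2Operator

noncomputable section

/-! The quadratic forms `V_q x = xᵀ Q_q x` serve as multiple Lyapunov functions. By Grönwall's
inequality, flowing for time `t` in a mode `q` with `Q_q A_q + A_qᵀ Q_q ⪯ c Q_q` multiplies `V_q`
by at most `exp (c t)`, and a reset from `p` to `q` multiplies it by at most `γ`. After `j`
switches the exponents add up to at most `−λ N_s(j) τ + μ N_u(j) η + j ln γ`, which the limsup
hypothesis bounds from above, and the unfinished last interval costs at most `exp (μ η)`. Since
the `Q_q` are positive definite, every `V_q` is comparable with `‖x‖²`, uniformly in `q`. -/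

open WithLp

namespace Matrix

variable {ι : Type*} [Fintype ι]

theorem PosSemidef.real_dotProduct_mulVec_nonneg {M : Matrix ι ι ℝ} (h : M.PosSemidef)
    (x : ι → ℝ) : 0 ≤ x ⬝ᵥ M *ᵥ x := by
  simpa only [star_trivial] using h.dotProduct_mulVec_nonneg x

theorem dotProduct_mulVec_le_of_posSemidef_sub {M N : Matrix ι ι ℝ} (h : (M - N).PosSemidef)
    (x : ι → ℝ) : x ⬝ᵥ N *ᵥ x ≤ x ⬝ᵥ M *ᵥ x := by
  have := h.real_dotProduct_mulVec_nonneg x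
  rwa [sub_mulVec, dotProduct_sub, sub_nonneg] at this

theorem dotProduct_transpose_mul_mul_mulVec (M N : Matrix ι ι ℝ) (x : ι → ℝ) :
    x ⬝ᵥ (Mᵀ * N * M) *ᵥ x = (M *ᵥ x) ⬝ᵥ N *ᵥ (M *ᵥ x) := by
  rw [← mulVec_mulVec, ← mulVec_mulVec, dotProduct_mulVec, vecMul_transpose]

theorem dotProduct_self_eq_norm_sq (x : ι → ℝ) : x ⬝ᵥ x = ‖toLp 2 x‖ ^ 2 := by
  rw [← real_inner_self_eq_norm_sq, EuclideanSpace.inner_toLp_toLp, star_trivial]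

theorem _root_.HasDerivAt.dotProduct {𝕜 : Type*} [NontriviallyNormedField 𝕜] {v w : 𝕜 → ι → 𝕜}
    {v' w' : ι → 𝕜} {t : 𝕜} (hv : HasDerivAt v v' t) (hw : HasDerivAt w w' t) :
    HasDerivAt (fun u => v u ⬝ᵥ w u) (v' ⬝ᵥ w t + v t ⬝ᵥ w') t := by
  simp only [_root_.dotProduct, ← Finset.sum_add_distrib]
  exact HasDerivAt.fun_sum fun i _ => (hasDerivAt_pi.1 hv i).mul (hasDerivAt_pi.1 hw i)

theorem _root_.HasDerivAt.mulVec {𝕜 : Type*} [NontriviallyNormedField 𝕜] [CompleteSpace 𝕜]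
    (M : Matrix ι ι 𝕜) {v : 𝕜 → ι → 𝕜} {v' : ι → 𝕜} {t : 𝕜} (hv : HasDerivAt v v' t) :
    HasDerivAt (fun u => M *ᵥ v u) (M *ᵥ v') t :=
  M.mulVecLin.toContinuousLinearMap.hasFDerivAt.comp_hasDerivAt t hv

variable [DecidableEq ι]

theorem hasDerivAt_exp_smul_mulVec (A : Matrix ι ι ℝ) (x : ι → ℝ) (t : ℝ) :
    HasDerivAt (fun u : ℝ => exp (u • A) *ᵥ x) (A *ᵥ (exp (t • A) *ᵥ x)) t := by
  have := ((LinearMap.applyₗ x ∘ₗ (toLin' : Matrix ι ι ℝ ≃ₗ[ℝ] _).toLinearMap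
    ).toContinuousLinearMap.hasFDerivAt).comp_hasDerivAt t (hasDerivAt_exp_smul_const' A t)
  simpa [Function.comp_def, mulVec_mulVec] using this

theorem dotProduct_mulVec_exp_smul_le {A Q : Matrix ι ι ℝ} {c : ℝ}
    (h : (c • Q - (Q * A + Aᵀ * Q)).PosSemidef) (x : ι → ℝ) {t : ℝ} (ht : 0 ≤ t) :
    (exp (t • A) *ᵥ x) ⬝ᵥ Q *ᵥ (exp (t • A) *ᵥ x) ≤ Real.exp (c * t) * (x ⬝ᵥ Q *ᵥ x) := by
  set y : ℝ → ι → ℝ := fun u => exp (u • A) *ᵥ x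
  have hy (u : ℝ) : HasDerivAt y (A *ᵥ y u) u := hasDerivAt_exp_smul_mulVec A x u
  have hV (u : ℝ) : HasDerivAt (fun u => y u ⬝ᵥ Q *ᵥ y u)
      (y u ⬝ᵥ (Q * A + Aᵀ * Q) *ᵥ y u) u := by
    refine ((hy u).dotProduct ((hy u).mulVec Q)).congr_deriv ?_
    rw [add_mulVec, dotProduct_add, add_comm, ← mulVec_mulVec, ← mulVec_mulVec,
      dotProduct_mulVec (y u) Aᵀ, vecMul_transpose]
  have hgronwall := le_gronwallBound_of_liminf_deriv_right_le (ε := 0) (K := c)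
    (fun u _ => (hV u).continuousAt.continuousWithinAt)
    (fun u _ r hr => (hV u).hasDerivWithinAt.liminf_right_slope_le hr) le_rfl
    (fun u _ => by simpa [smul_mulVec] using dotProduct_mulVec_le_of_posSemidef_sub h (y u))
    t ⟨ht, le_rfl⟩
  simpa [gronwallBound_ε0, y, mul_comm] using hgronwall

theorem dotProduct_mulVec_exp_smul_le_exp {A Q : Matrix ι ι ℝ} {c t b : ℝ} (hQ : Q.PosSemidef)
    (h : (c • Q - (Q * A + Aᵀ * Q)).PosSemidef) (x : ι → ℝ) (ht : 0 ≤ t) (hb : c * t ≤ b) :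
    (exp (t • A) *ᵥ x) ⬝ᵥ Q *ᵥ (exp (t • A) *ᵥ x) ≤ Real.exp b * (x ⬝ᵥ Q *ᵥ x) :=
  (dotProduct_mulVec_exp_smul_le h x ht).trans <|
    mul_le_mul_of_nonneg_right (Real.exp_le_exp.2 hb) (hQ.real_dotProduct_mulVec_nonneg x)

theorem dotProduct_mulVec_mul_exp_smul_le {R A Q Q' : Matrix ι ι ℝ} {γ' γ c t b : ℝ}
    (hQ : Q.PosSemidef) (hR : (γ' • Q - Rᵀ * Q' * R).PosSemidef) (hγ : 0 < γ) (hγ' : γ' ≤ γ)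
    (hA : (c • Q - (Q * A + Aᵀ * Q)).PosSemidef) (ht : 0 ≤ t) (hb : c * t ≤ b) (z : ι → ℝ) :
    ((R * exp (t • A)) *ᵥ z) ⬝ᵥ Q' *ᵥ ((R * exp (t • A)) *ᵥ z)
      ≤ Real.exp (b + Real.log γ) * (z ⬝ᵥ Q *ᵥ z) := by
  set y := exp (t • A) *ᵥ z
  calc ((R * exp (t • A)) *ᵥ z) ⬝ᵥ Q' *ᵥ ((R * exp (t • A)) *ᵥ z)
      = (R *ᵥ y) ⬝ᵥ Q' *ᵥ (R *ᵥ y) := by rw [← mulVec_mulVec]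
    _ ≤ γ' * (y ⬝ᵥ Q *ᵥ y) := by
        simpa [dotProduct_transpose_mul_mul_mulVec, smul_mulVec] using
          dotProduct_mulVec_le_of_posSemidef_sub hR y
    _ ≤ γ * (Real.exp b * (z ⬝ᵥ Q *ᵥ z)) :=
        mul_le_mul hγ' (dotProduct_mulVec_exp_smul_le_exp hQ hA z ht hb)
          (hQ.real_dotProduct_mulVec_nonneg y) hγ.le
    _ = Real.exp (b + Real.log γ) * (z ⬝ᵥ Q *ᵥ z) := by
        rw [Real.exp_add, Real.exp_log hγ]; ring

theorem dotProduct_mulVec_le_l2_opNorm_mul_norm_sq (Q : Matrix ι ι ℝ) (x : ι → ℝ) :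
    x ⬝ᵥ Q *ᵥ x ≤ ‖Q‖ * ‖toLp 2 x‖ ^ 2 := by
  calc x ⬝ᵥ Q *ᵥ x = inner ℝ (toLp 2 x) (toLp 2 (Q *ᵥ x)) := by
        rw [EuclideanSpace.inner_toLp_toLp, star_trivial, dotProduct_comm]
    _ ≤ ‖toLp 2 x‖ * ‖toLp 2 (Q *ᵥ x)‖ := real_inner_le_norm _ _
    _ ≤ ‖toLp 2 x‖ * (‖Q‖ * ‖toLp 2 x‖) := by
        gcongr; simpa using Q.l2_opNorm_mulVec (toLp 2 x)
    _ = ‖Q‖ * ‖toLp 2 x‖ ^ 2 := by ring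

open scoped MatrixOrder in
theorem PosDef.exists_norm_sq_le_mul_dotProduct_mulVec {Q : Matrix ι ι ℝ} (hQ : Q.PosDef) :
    ∃ c, 0 ≤ c ∧ ∀ x : ι → ℝ, ‖toLp 2 x‖ ^ 2 ≤ c * (x ⬝ᵥ Q *ᵥ x) := by
  obtain ⟨B, hB, rfl⟩ :=
    CStarAlgebra.isStrictlyPositive_iff_eq_star_mul_self.mp hQ.isStrictlyPositive
  refine ⟨‖B⁻¹‖ ^ 2, by positivity, fun x => ?_⟩
  have hx : x = B⁻¹ *ᵥ (B *ᵥ x) := by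
    rw [mulVec_mulVec, nonsing_inv_mul B ((isUnit_iff_isUnit_det B).mp hB), one_mulVec]
  calc ‖toLp 2 x‖ ^ 2 ≤ (‖B⁻¹‖ * ‖toLp 2 (B *ᵥ x)‖) ^ 2 := by
        gcongr
        conv_lhs => rw [hx]
        simpa using B⁻¹.l2_opNorm_mulVec (toLp 2 (B *ᵥ x))
    _ = ‖B⁻¹‖ ^ 2 * (x ⬝ᵥ (star B * B) *ᵥ x) := by
        rw [star_eq_conjTranspose, conjTranspose_eq_transpose_of_trivial, ← mulVec_mulVec,
          dotProduct_mulVec, vecMul_transpose, dotProduct_self_eq_norm_sq, mul_pow]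

theorem l2_opNorm_le_sqrt {M : Matrix ι ι ℝ} {D : ℝ}
    (h : ∀ x : ι → ℝ, ‖toLp 2 (M *ᵥ x)‖ ^ 2 ≤ D * ‖toLp 2 x‖ ^ 2) : ‖M‖ ≤ √D := by
  rw [l2_opNorm_def]
  refine ContinuousLinearMap.opNorm_le_bound _ (Real.sqrt_nonneg D) fun x => ?_
  rw [← Real.sqrt_sq (norm_nonneg x), ← Real.sqrt_mul' _ (sq_nonneg _),
    ← Real.sqrt_sq (norm_nonneg _)]
  exact Real.sqrt_le_sqrt (by simpa [toLpLin_apply] using h (ofLp x))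

theorem exists_l2_opNorm_le_of_dotProduct_mulVec_le {P : Type*} [Finite P]
    {Q : P → Matrix ι ι ℝ} (hQ : ∀ q, (Q q).PosDef) (q₀ : P) {K : ℝ} (hK : 0 ≤ K) :
    ∃ C > 0, ∀ (M : Matrix ι ι ℝ) (q : P),
      (∀ x, (M *ᵥ x) ⬝ᵥ Q q *ᵥ (M *ᵥ x) ≤ K * (x ⬝ᵥ Q q₀ *ᵥ x)) → ‖M‖ ≤ C := by
  choose c hc₀ hc using fun q => (hQ q).exists_norm_sq_le_mul_dotProduct_mulVec
  obtain ⟨c', hc'⟩ := Finite.exists_le c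
  have hc'₀ : 0 ≤ c' := (hc₀ q₀).trans (hc' q₀)
  refine ⟨√(c' * K * ‖Q q₀‖ + 1), by positivity, fun M q hM => l2_opNorm_le_sqrt fun x => ?_⟩
  calc ‖toLp 2 (M *ᵥ x)‖ ^ 2 ≤ c q * ((M *ᵥ x) ⬝ᵥ Q q *ᵥ (M *ᵥ x)) := hc q _
    _ ≤ c' * (K * (x ⬝ᵥ Q q₀ *ᵥ x)) :=
        mul_le_mul (hc' q) (hM x) ((hQ q).posSemidef.real_dotProduct_mulVec_nonneg _) hc'₀
    _ ≤ c' * (K * (‖Q q₀‖ * ‖toLp 2 x‖ ^ 2)) := by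
        gcongr; exact dotProduct_mulVec_le_l2_opNorm_mul_norm_sq _ _
    _ ≤ (c' * K * ‖Q q₀‖ + 1) * ‖toLp 2 x‖ ^ 2 := by nlinarith [sq_nonneg ‖toLp 2 x‖]

end Matrix

-- `limsup` of a sequence of reals that is not bounded above is `0` by convention.
theorem Real.bddAbove_range_of_limsup_ne_zero {u : ℕ → ℝ}
    (h : Filter.limsup u Filter.atTop ≠ 0) : BddAbove (Set.range u) := by
  by_contra hu
  refine h (Real.limsup_of_not_isBoundedUnder fun hb => hu ?_)
  rw [← Nat.cofinite_eq_atTop] at hb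
  exact hb.bddAbove_range_of_cofinite

section ResetSwitchedSystem

variable {n : ℕ} {P : Type*}

theorem resetTransition_dotProduct_mulVec_le {A Q : P → Matrix (Fin n) (Fin n) ℝ}
    {R : P → P → Matrix (Fin n) (Fin n) ℝ} {p : ℕ → P} {d w : ℕ → ℝ}
    (hstep : ∀ j z, ((R (p j) (p (j + 1)) * exp (d (j + 1) • A (p j))) *ᵥ z) ⬝ᵥ
        Q (p (j + 1)) *ᵥ ((R (p j) (p (j + 1)) * exp (d (j + 1) • A (p j))) *ᵥ z)
          ≤ Real.exp (w j) * (z ⬝ᵥ Q (p j) *ᵥ z))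
    (j : ℕ) (x : Fin n → ℝ) :
    (resetTransition A R p d j *ᵥ x) ⬝ᵥ Q (p j) *ᵥ (resetTransition A R p d j *ᵥ x)
      ≤ Real.exp (∑ i ∈ Finset.range j, w i) * (x ⬝ᵥ Q (p 0) *ᵥ x) := by
  induction j with
  | zero => simp [resetTransition]
  | succ j ih =>
    calc _ ≤ Real.exp (w j) * ((resetTransition A R p d j *ᵥ x) ⬝ᵥ
          Q (p j) *ᵥ (resetTransition A R p d j *ᵥ x)) := by
          rw [resetTransition, ← mulVec_mulVec]; exact hstep j _
      _ ≤ Real.exp (w j) * (Real.exp (∑ i ∈ Finset.range j, w i) * (x ⬝ᵥ Q (p 0) *ᵥ x)) := by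
          gcongr
      _ = _ := by rw [Finset.sum_range_succ, Real.exp_add]; ring

-- The bound on `c * t` is the contribution of one interval to the exponent in the limsup
-- hypothesis of the main theorem.
theorem exists_lyapunov_rate [DecidableEq P] {S U : Finset P} {A Q : P → Matrix (Fin n) (Fin n) ℝ}
    {lamf muf : P → ℝ} {lam mu τ η t : ℝ} {q : P} (hq : q ∈ S ∨ q ∈ U)
    (hlamf : ∀ p ∈ S, 0 < lamf p) (hmuf : ∀ p ∈ U, 0 < muf p)
    (hQA_s : ∀ p ∈ S, ((-(lamf p)) • Q p - (Q p * A p + (A p)ᵀ * Q p)).PosSemidef)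
    (hQA_u : ∀ p ∈ U, ((muf p) • Q p - (Q p * A p + (A p)ᵀ * Q p)).PosSemidef)
    (hlam_lb : ∀ p ∈ S, lam ≤ lamf p) (hmu_ub : ∀ p ∈ U, muf p ≤ mu)
    (hτ : 0 ≤ τ) (hη : 0 ≤ η) (hmu : 0 ≤ mu)
    (ht : 0 ≤ t) (htS : q ∈ S → τ ≤ t) (htU : q ∈ U → t ≤ η) :
    ∃ c, (c • Q q - (Q q * A q + (A q)ᵀ * Q q)).PosSemidef ∧
      c * t ≤ (if q ∈ S then -lam * τ else 0) + (if q ∈ U then mu * η else 0) ∧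
      ∀ s, 0 ≤ s → s ≤ t → c * s ≤ mu * η := by
  by_cases hqS : q ∈ S
  · have := hlamf q hqS
    have := hlam_lb q hqS
    have := htS hqS
    refine ⟨-lamf q, hQA_s q hqS, ?_, fun s hs _ => by nlinarith⟩
    rw [if_pos hqS]
    split_ifs <;> nlinarith
  · have hqU := hq.resolve_left hqS
    have := hmuf q hqU
    have := hmu_ub q hqU
    have := htU hqU
    refine ⟨muf q, hQA_u q hqU, ?_, fun s hs hst => by nlinarith⟩
    rw [if_neg hqS, if_pos hqU]
    nlinarith

end ResetSwitchedSystem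

theorem reset_system_stable_of_MLF_mixed_general {n : ℕ} {P : Type*} [Fintype P] [DecidableEq P]
    (S U : Finset P) (hSU : S ∪ U = Finset.univ)
    (hU : U.Nonempty)
    (A : P → Matrix (Fin n) (Fin n) ℝ)
    (R : P → P → Matrix (Fin n) (Fin n) ℝ)
    (Q : P → Matrix (Fin n) (Fin n) ℝ) (hQ : ∀ p, (Q p).PosDef)
    (lamf muf : P → ℝ) (γf : P → P → ℝ)
    (hlamf : ∀ p ∈ S, 0 < lamf p) (hmuf : ∀ p ∈ U, 0 < muf p)
    (hγf : ∀ p q, 0 < γf p q)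
    (hQA_s : ∀ p ∈ S, ((-(lamf p)) • Q p - (Q p * A p + (A p)ᵀ * Q p)).PosSemidef)
    (hQA_u : ∀ p ∈ U, ((muf p) • Q p - (Q p * A p + (A p)ᵀ * Q p)).PosSemidef)
    (hR : ∀ p q, (γf p q • Q p - (R p q)ᵀ * Q q * R p q).PosSemidef)
    (lam mu γ : ℝ)
    (hlam_lb : ∀ p ∈ S, lam ≤ lamf p)
    (hmu_ub : ∀ p ∈ U, muf p ≤ mu)
    (hγ_ub : ∀ p q, γf p q ≤ γ)
    (τ η : ℝ) (hτ : 0 < τ) (hη : 0 < η)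
    (p : ℕ → P) (d : ℕ → ℝ)
    (hd : ∀ k, 1 ≤ k → 0 < d k)
    (hdS : ∀ k, 1 ≤ k → p (k - 1) ∈ S → τ ≤ d k)
    (hdU : ∀ k, 1 ≤ k → p (k - 1) ∈ U → d k ≤ η)
    (hlimsup : Filter.limsup (fun j : ℕ =>
        -lam * (((Finset.range j).filter fun i => p i ∈ S).card : ℝ) * τ +
          mu * (((Finset.range j).filter fun i => p i ∈ U).card : ℝ) * η +
          (j : ℝ) * Real.log γ) Filter.atTop < 0) :
    ∃ C > (0 : ℝ), ∀ (j : ℕ) (s : ℝ), 0 ≤ s → s ≤ d (j + 1) →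
      ‖exp (s • A (p j)) * resetTransition A R p d j‖ ≤ C := by
  have hγ : 0 < γ := (hγf (p 0) (p 0)).trans_le (hγ_ub _ _)
  have hmu : 0 ≤ mu := hU.elim fun q hq => (hmuf q hq).le.trans (hmu_ub q hq)
  choose c hcQ hcd hcs using fun j : ℕ =>
    exists_lyapunov_rate (q := p j) (Finset.mem_union.1 (hSU ▸ Finset.mem_univ (p j))) hlamf
      hmuf hQA_s hQA_u hlam_lb hmu_ub hτ.le hη.le hmu (hd (j + 1) le_add_self).le
      (hdS (j + 1) le_add_self) (hdU (j + 1) le_add_self)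
  have hΦ := resetTransition_dotProduct_mulVec_le (A := A) (R := R) (d := d) fun j =>
    dotProduct_mulVec_mul_exp_smul_le (hQ _).posSemidef (hR _ _) hγ (hγ_ub _ _) (hcQ j)
      (hd (j + 1) le_add_self).le (hcd j)
  obtain ⟨B, hB⟩ := Real.bddAbove_range_of_limsup_ne_zero hlimsup.ne
  have hexp (j : ℕ) : ∑ i ∈ Finset.range j, ((if p i ∈ S then -lam * τ else 0) +
      (if p i ∈ U then mu * η else 0) + Real.log γ) ≤ B := by
    simp only [Finset.sum_add_distrib, ← Finset.sum_filter, Finset.sum_const, nsmul_eq_mul,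
      Finset.card_range]
    linarith [hB ⟨j, rfl⟩]
  obtain ⟨C, hC, hbound⟩ := exists_l2_opNorm_le_of_dotProduct_mulVec_le hQ (p 0)
    (K := Real.exp (mu * η) * Real.exp B) (by positivity)
  refine ⟨C, hC, fun j s hs hsd => hbound _ (p j) fun x => ?_⟩
  set y := resetTransition A R p d j *ᵥ x
  have hV₀ := (hQ (p 0)).posSemidef.real_dotProduct_mulVec_nonneg x
  calc _ = (exp (s • A (p j)) *ᵥ y) ⬝ᵥ Q (p j) *ᵥ (exp (s • A (p j)) *ᵥ y) := by
        rw [← mulVec_mulVec]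
    _ ≤ Real.exp (mu * η) * (y ⬝ᵥ Q (p j) *ᵥ y) :=
        dotProduct_mulVec_exp_smul_le_exp (hQ _).posSemidef (hcQ j) y hs (hcs j s hs hsd)
    _ ≤ Real.exp (mu * η) * (Real.exp B * (x ⬝ᵥ Q (p 0) *ᵥ x)) := by
        gcongr
        exact (hΦ j x).trans (by gcongr; exact hexp j)
    _ = Real.exp (mu * η) * Real.exp B * (x ⬝ᵥ Q (p 0) *ᵥ x) := by ring

/-- MLF criterion for reset switched systems with both stable and unstable modes: under the
Lyapunov inequalities with rates `λ_p`, `μ_p` and reset gains `γ_{(p,q)}`, and the limsup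
condition `limsup_j (−λ N_s(j) τ + μ N_u(j) η + j ln γ) < 0` along a switching signal with
dwell time `τ` in stable modes and flee time `η` in unstable modes, the reset switched
system is stable along this signal. -/
theorem reset_system_stable_of_MLF_mixed {n : ℕ} {P : Type*} [Fintype P] [DecidableEq P]
    (S U : Finset P) (hSU : S ∪ U = Finset.univ) (hdisj : Disjoint S U)
    (hS : S.Nonempty) (hU : U.Nonempty)
    (A : P → Matrix (Fin n) (Fin n) ℝ)
    (R : P → P → Matrix (Fin n) (Fin n) ℝ)
    (Q : P → Matrix (Fin n) (Fin n) ℝ) (hQ : ∀ p, (Q p).PosDef)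
    (lamf muf : P → ℝ) (γf : P → P → ℝ)
    (hlamf : ∀ p ∈ S, 0 < lamf p) (hmuf : ∀ p ∈ U, 0 < muf p)
    (hγf : ∀ p q, 0 < γf p q)
    (hQA_s : ∀ p ∈ S, ((-(lamf p)) • Q p - (Q p * A p + (A p)ᵀ * Q p)).PosSemidef)
    (hQA_u : ∀ p ∈ U, ((muf p) • Q p - (Q p * A p + (A p)ᵀ * Q p)).PosSemidef)
    (hR : ∀ p q, (γf p q • Q p - (R p q)ᵀ * Q q * R p q).PosSemidef)
    (lam mu γ : ℝ)
    (hlam_lb : ∀ p ∈ S, lam ≤ lamf p) (hlam_mem : ∃ p ∈ S, lam = lamf p)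
    (hmu_ub : ∀ p ∈ U, muf p ≤ mu) (hmu_mem : ∃ p ∈ U, mu = muf p)
    (hγ_ub : ∀ p q, γf p q ≤ γ) (hγ_mem : ∃ p q, γ = γf p q)
    (τ η : ℝ) (hτ : 0 < τ) (hη : 0 < η)
    (p : ℕ → P) (d : ℕ → ℝ)
    (hd : ∀ k, 1 ≤ k → 0 < d k)
    (hdS : ∀ k, 1 ≤ k → p (k - 1) ∈ S → τ ≤ d k)
    (hdU : ∀ k, 1 ≤ k → p (k - 1) ∈ U → d k ≤ η)
    (hlimsup : Filter.limsup (fun j : ℕ =>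
        -lam * (((Finset.range j).filter fun i => p i ∈ S).card : ℝ) * τ +
          mu * (((Finset.range j).filter fun i => p i ∈ U).card : ℝ) * η +
          (j : ℝ) * Real.log γ) Filter.atTop < 0) :
    ∃ C > (0 : ℝ), ∀ (j : ℕ) (s : ℝ), 0 ≤ s → s ≤ d (j + 1) →
      ‖exp (s • A (p j)) * resetTransition A R p d j‖ ≤ C :=
  reset_system_stable_of_MLF_mixed_general S U hSU hU A R Q hQ lamf muf γf hlamf hmuf hγf hQA_s
    hQA_u hR lam mu γ hlam_lb hmu_ub hγ_ub τ η hτ hη p d hd hdS hdU hlimsup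
end
end

section
/- Let A be an n×n real matrix, τ > 0, let Q be a symmetric positive semidefinite n×n real matrix and Q' a symmetric n×n real matrix, and let M_1, …, M_k be n×n real matrices. Then the linear matrix inequality exp(τ·A)ᵀ·Mᵀ·Q·M·exp(τ·A) ⪯ Q' holds for every M in the convex hull of {M_1, …, M_k} if and only if it holds for each M = M_i, i = 1, …, k. -/
/-!
For `Q ⪰ 0` the map `X ↦ Xᵀ Q X` is matrix-convex: along a segment it falls short of being affine
by `a b (X - Y)ᵀ Q (X - Y) ⪰ 0`. Hence the set of `N` satisfying the LMI, the preimage of a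
sublevel set of this map under `N ↦ N exp(τA)`, is convex, and it contains the convex hull as soon
as it contains the vertices.
-/

open Matrix NormedSpace

namespace Matrix

variable {m p : Type*} [Fintype m]

lemma transpose_mul_mul_same_smul_add_smul {R : Type*} [CommRing R] (Q : Matrix m m R)
    (X Y : Matrix m p R) {a b : R} (hab : a + b = 1) :
    (a • X + b • Y)ᵀ * Q * (a • X + b • Y) =
      a • (Xᵀ * Q * X) + b • (Yᵀ * Q * Y) - (a * b) • ((X - Y)ᵀ * Q * (X - Y)) := by
  obtain rfl : b = 1 - a := by rw [← hab]; ring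
  simp only [transpose_add, transpose_smul, transpose_sub, Matrix.add_mul, Matrix.mul_add,
    Matrix.sub_mul, Matrix.mul_sub, Matrix.smul_mul, Matrix.mul_smul, smul_sub, smul_add,
    smul_smul]
  module

lemma convex_setOf_posSemidef_sub_transpose_mul_mul_same [Fintype p] {Q : Matrix m m ℝ}
    (hQ : Q.PosSemidef) (P : Matrix p p ℝ) :
    Convex ℝ {X : Matrix m p ℝ | (P - Xᵀ * Q * X).PosSemidef} := by
  intro X hX Y hY a b ha hb hab
  have hXY : ((X - Y)ᵀ * Q * (X - Y)).PosSemidef := by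
    simpa using hQ.conjTranspose_mul_mul_same (X - Y)
  have hsplit : P - (a • X + b • Y)ᵀ * Q * (a • X + b • Y) =
      a • (P - Xᵀ * Q * X) + b • (P - Yᵀ * Q * Y) + (a * b) • ((X - Y)ᵀ * Q * (X - Y)) := by
    rw [transpose_mul_mul_same_smul_add_smul Q X Y hab]
    obtain rfl : b = 1 - a := by rw [← hab]; ring
    module
  rw [Set.mem_ofPred_eq, hsplit]
  exact ((hX.smul ha).add (hY.smul hb)).add (hXY.smul (mul_nonneg ha hb))

end Matrix

theorem lmi_convexHull_iff_vertices_general {n k : ℕ} (A : Matrix (Fin n) (Fin n) ℝ)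
    (τ : ℝ)
    (Q Q' : Matrix (Fin n) (Fin n) ℝ) (hQ : Q.PosSemidef)
    (M : Fin k → Matrix (Fin n) (Fin n) ℝ) :
    (∀ N ∈ convexHull ℝ (Set.range M),
        (Q' - (exp (τ • A))ᵀ * Nᵀ * Q * N * exp (τ • A)).PosSemidef) ↔
      ∀ i, (Q' - (exp (τ • A))ᵀ * (M i)ᵀ * Q * M i * exp (τ • A)).PosSemidef := by
  set E := exp (τ • A)
  have hconv : Convex ℝ {N | (Q' - Eᵀ * Nᵀ * Q * N * E).PosSemidef} := by
    have := (convex_setOf_posSemidef_sub_transpose_mul_mul_same hQ Q').linear_preimage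
      (LinearMap.mulRight ℝ E)
    simpa only [Set.preimage_ofPred_eq, LinearMap.mulRight_apply, transpose_mul,
      Matrix.mul_assoc] using this
  exact hconv.convexHull_subset_iff.trans Set.range_subset_iff

/-- The LMI `exp(τA)ᵀ Mᵀ Q M exp(τA) ⪯ Q'` holds for every `M` in the convex hull of
`M_1, …, M_k` if and only if it holds at each vertex `M_i`. -/
theorem lmi_convexHull_iff_vertices {n k : ℕ} (A : Matrix (Fin n) (Fin n) ℝ)
    (τ : ℝ) (hτ : 0 < τ)
    (Q Q' : Matrix (Fin n) (Fin n) ℝ) (hQ : Q.PosSemidef) (hQ' : Q'.IsSymm)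
    (M : Fin k → Matrix (Fin n) (Fin n) ℝ) :
    (∀ N ∈ convexHull ℝ (Set.range M),
        (Q' - (exp (τ • A))ᵀ * Nᵀ * Q * N * exp (τ • A)).PosSemidef) ↔
      ∀ i, (Q' - (exp (τ • A))ᵀ * (M i)ᵀ * Q * M i * exp (τ • A)).PosSemidef :=
  lmi_convexHull_iff_vertices_general A τ Q Q' hQ M
end

section
/- Let P be a finite index set, (A_p)_{p∈P} a family of n×n real matrices, and (R_{(p,q)})_{p,q∈P} reset matrices. Suppose that for some positive constants (τ_p)_{p∈P} there exists a collection of symmetric positive definite matrices (Q_p)_{p∈P} such that Q_p·A_p + A_pᵀ·Q_p is negative definite for all p ∈ P, and exp(τ_q·A_q)ᵀ·R_{(q,p)}ᵀ·Q_p·R_{(q,p)}·exp(τ_q·A_q) ⪯ Q_q for all p, q ∈ P. Then there exists C > 0 such that for every j ≥ 0, every switching sequence p_0, …, p_j ∈ P, all durations d_1, …, d_j with d_k ≥ τ_{p_{k−1}} for 1 ≤ k ≤ j, and every s ≥ 0, one has ‖exp(s·A_{p_j})·Φ_j‖ ≤ C; that is, the reset switched system is stable for every switching signal with mode-dependent dwell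 times (τ_p)_{p∈P}. -/
open Matrix NormedSpace
open scoped Matrix.Norms.L2Operator

noncomputable section

/-!
The quadratic forms `V_p x = xᵀ Q_p x` form a multiple Lyapunov function. Along the flow of mode
`p` the derivative of `V_p (exp (t A_p) x)` is `yᵀ (Q_p A_p + A_pᵀ Q_p) y ≤ 0`, so `V_p` does not
increase while mode `p` is active, and the LMI says that flowing for the dwell time `τ_q` and then
resetting into mode `p` does not increase `V` either. Splitting each duration `d_k ≥ τ_{p_{k-1}}` as
`τ_{p_{k-1}} + (d_k - τ_{p_{k-1}})` gives `V_{p_j} (exp (s A_{p_j}) Φ_j x) ≤ V_{p_0} x`. Writing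
`Q_p = S_pᵀ S_p` with `S_p` invertible turns this into
`‖exp (s A_{p_j}) Φ_j‖ ≤ ‖S_{p_j}⁻¹‖ ‖S_{p_0}‖`, which is bounded because `P` is finite.
-/

theorem EuclideanSpace.norm_toLp_sq {k : Type*} [Fintype k] (v : k → ℝ) :
    ‖WithLp.toLp 2 v‖ ^ 2 = v ⬝ᵥ v := by
  rw [EuclideanSpace.real_norm_sq_eq]
  simp [dotProduct, sq]

namespace Matrix

theorem dotProduct_transpose_mul_self_mulVec {m n R : Type*} [Fintype m] [Fintype n]
    [CommSemiring R] (E : Matrix m n R) (x : n → R) :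
    x ⬝ᵥ ((Eᵀ * E) *ᵥ x) = (E *ᵥ x) ⬝ᵥ (E *ᵥ x) := by
  rw [← mulVec_mulVec, dotProduct_mulVec, vecMul_transpose]

theorem dotProduct_transpose_mul_mul_mulVec_s18 {m n R : Type*} [Fintype m] [Fintype n]
    [CommSemiring R] (E : Matrix m n R) (N : Matrix m m R) (x : n → R) :
    x ⬝ᵥ ((Eᵀ * N * E) *ᵥ x) = (E *ᵥ x) ⬝ᵥ (N *ᵥ (E *ᵥ x)) := by
  rw [← mulVec_mulVec, ← mulVec_mulVec, dotProduct_mulVec, vecMul_transpose]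

theorem dotProduct_mulVec_le_of_posSemidef_sub_s18 {m n : Type*} [Fintype m] [Fintype n]
    {E : Matrix m n ℝ} {Q : Matrix n n ℝ} {Q' : Matrix m m ℝ}
    (h : (Q - Eᵀ * Q' * E).PosSemidef) (x : n → ℝ) :
    (E *ᵥ x) ⬝ᵥ (Q' *ᵥ (E *ᵥ x)) ≤ x ⬝ᵥ (Q *ᵥ x) := by
  have hx := h.dotProduct_mulVec_nonneg x
  rwa [star_trivial, sub_mulVec, dotProduct_sub, sub_nonneg,
    dotProduct_transpose_mul_mul_mulVec_s18] at hx

theorem l2_opNorm_le_of_dotProduct_mulVec_self_le {m l n : Type*} [Fintype m] [Fintype l]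
    [Fintype n] [DecidableEq n] {B : Matrix m n ℝ} {D : Matrix l n ℝ}
    (h : ∀ x, (B *ᵥ x) ⬝ᵥ (B *ᵥ x) ≤ (D *ᵥ x) ⬝ᵥ (D *ᵥ x)) : ‖B‖ ≤ ‖D‖ := by
  rw [l2_opNorm_def B]
  refine ContinuousLinearMap.opNorm_le_bound _ (norm_nonneg D) fun x => ?_
  calc ‖(EuclideanSpace.equiv m ℝ).symm (B *ᵥ x)‖
      ≤ ‖(EuclideanSpace.equiv l ℝ).symm (D *ᵥ x)‖ := by
        rw [← pow_le_pow_iff_left₀ (norm_nonneg _) (norm_nonneg _) two_ne_zero]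
        change ‖WithLp.toLp 2 (B *ᵥ x)‖ ^ 2 ≤ ‖WithLp.toLp 2 (D *ᵥ x)‖ ^ 2
        simpa only [EuclideanSpace.norm_toLp_sq] using h x
    _ ≤ ‖D‖ * ‖x‖ := l2_opNorm_mulVec D x

variable {n : Type*} [Fintype n] [DecidableEq n]

theorem exp_add_smul (A : Matrix n n ℝ) (s t : ℝ) :
    exp ((s + t) • A) = exp (s • A) * exp (t • A) := by
  rw [add_smul, exp_add_of_commute _ _ (((Commute.refl A).smul_left s).smul_right t)]

theorem hasDerivAt_transpose_exp_smul_mul_mul_exp_smul (A Q : Matrix n n ℝ) (t : ℝ) :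
    HasDerivAt (fun t : ℝ => (exp (t • A))ᵀ * Q * exp (t • A))
      ((exp (t • A))ᵀ * (Q * A + Aᵀ * Q) * exp (t • A)) t := by
  simp_rw [← exp_transpose, transpose_smul]
  refine (((hasDerivAt_exp_smul_const Aᵀ t).mul_const Q).mul
    (hasDerivAt_exp_smul_const' A t)).congr_deriv ?_
  simp only [mul_add, add_mul, mul_assoc, add_comm]

theorem dotProduct_mulVec_exp_smul_le_s18 {A Q : Matrix n n ℝ}
    (hQA : (-(Q * A + Aᵀ * Q)).PosSemidef) (x : n → ℝ) {s : ℝ} (hs : 0 ≤ s) :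
    (exp (s • A) *ᵥ x) ⬝ᵥ (Q *ᵥ (exp (s • A) *ᵥ x)) ≤ x ⬝ᵥ (Q *ᵥ x) := by
  let L : Matrix n n ℝ →L[ℝ] ℝ := LinearMap.toContinuousLinearMap
    { toFun := fun M => x ⬝ᵥ (M *ᵥ x)
      map_add' := fun M N => by simp only [add_mulVec, dotProduct_add]
      map_smul' := fun c M => by simp only [smul_mulVec, dotProduct_smul, RingHom.id_apply] }
  have hderiv (t : ℝ) : HasDerivAt (fun t : ℝ => (exp (t • A) *ᵥ x) ⬝ᵥ (Q *ᵥ (exp (t • A) *ᵥ x)))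
      ((exp (t • A) *ᵥ x) ⬝ᵥ ((Q * A + Aᵀ * Q) *ᵥ (exp (t • A) *ᵥ x))) t := by
    simp only [← dotProduct_transpose_mul_mul_mulVec_s18]
    exact L.hasFDerivAt.comp_hasDerivAt t (hasDerivAt_transpose_exp_smul_mul_mul_exp_smul A Q t)
  have hanti : Antitone fun t : ℝ => (exp (t • A) *ᵥ x) ⬝ᵥ (Q *ᵥ (exp (t • A) *ᵥ x)) := by
    refine antitone_of_deriv_nonpos (fun t => (hderiv t).differentiableAt) fun t => ?_
    have hneg := hQA.dotProduct_mulVec_nonneg (exp (t • A) *ᵥ x)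
    rwa [star_trivial, neg_mulVec, dotProduct_neg, neg_nonneg, ← (hderiv t).deriv] at hneg
  simpa using hanti hs

open scoped MatrixOrder in
theorem PosDef.exists_isUnit_eq_transpose_mul_self {Q : Matrix n n ℝ} (hQ : Q.PosDef) :
    ∃ S : Matrix n n ℝ, IsUnit S ∧ Q = Sᵀ * S := by
  refine ⟨CFC.sqrt Q, (CFC.isUnit_sqrt_iff Q hQ.posSemidef.nonneg).2 hQ.isUnit, ?_⟩
  rw [← conjTranspose_eq_transpose_of_trivial, ← star_eq_conjTranspose,
    (CFC.sqrt_nonneg Q).isSelfAdjoint.star_eq, CFC.sqrt_mul_sqrt_self Q hQ.posSemidef.nonneg]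

theorem l2_opNorm_le_of_dotProduct_mulVec_le {m l : Type*} [Fintype m] [DecidableEq m]
    [Fintype l] {M : Matrix m n ℝ} {S : Matrix m m ℝ} {S' : Matrix l n ℝ} (hS : IsUnit S)
    (h : ∀ x, (M *ᵥ x) ⬝ᵥ ((Sᵀ * S) *ᵥ (M *ᵥ x)) ≤ x ⬝ᵥ ((S'ᵀ * S') *ᵥ x)) :
    ‖M‖ ≤ ‖S⁻¹‖ * ‖S'‖ := by
  calc ‖M‖ = ‖S⁻¹ * (S * M)‖ := by
        rw [← Matrix.mul_assoc, nonsing_inv_mul _ ((isUnit_iff_isUnit_det S).1 hS),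
          Matrix.one_mul]
    _ ≤ ‖S⁻¹‖ * ‖S * M‖ := l2_opNorm_mul _ _
    _ ≤ ‖S⁻¹‖ * ‖S'‖ := by
        gcongr
        refine l2_opNorm_le_of_dotProduct_mulVec_self_le fun x => ?_
        have hx := h x
        rwa [dotProduct_transpose_mul_self_mulVec, dotProduct_transpose_mul_self_mulVec,
          mulVec_mulVec] at hx

end Matrix

section ResetSwitchedSystem

variable {n : ℕ} {P : Type*} {A : P → Matrix (Fin n) (Fin n) ℝ}
  {R : P → P → Matrix (Fin n) (Fin n) ℝ} {Q : P → Matrix (Fin n) (Fin n) ℝ} {τ : P → ℝ}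

theorem dotProduct_mulVec_resetTransition_le
    (hflow : ∀ p x {s : ℝ}, 0 ≤ s →
      (exp (s • A p) *ᵥ x) ⬝ᵥ (Q p *ᵥ (exp (s • A p) *ᵥ x)) ≤ x ⬝ᵥ (Q p *ᵥ x))
    (hjump : ∀ p q x, ((R p q * exp (τ p • A p)) *ᵥ x) ⬝ᵥ
      (Q q *ᵥ ((R p q * exp (τ p • A p)) *ᵥ x)) ≤ x ⬝ᵥ (Q p *ᵥ x))
    {p : ℕ → P} {d : ℕ → ℝ} {j : ℕ} (hd : ∀ k, 1 ≤ k → k ≤ j → τ (p (k - 1)) ≤ d k)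
    (x : Fin n → ℝ) :
    (resetTransition A R p d j *ᵥ x) ⬝ᵥ (Q (p j) *ᵥ (resetTransition A R p d j *ᵥ x)) ≤
      x ⬝ᵥ (Q (p 0) *ᵥ x) := by
  induction j with
  | zero => simp [resetTransition]
  | succ j ih =>
    have hdwell : τ (p j) ≤ d (j + 1) := by simpa using hd (j + 1) (Nat.le_add_left 1 j) le_rfl
    have hsplit : exp (d (j + 1) • A (p j)) =
        exp (τ (p j) • A (p j)) * exp ((d (j + 1) - τ (p j)) • A (p j)) := by
      rw [← exp_add_smul, add_sub_cancel]
    have hstep : resetTransition A R p d (j + 1) *ᵥ x =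
        (R (p j) (p (j + 1)) * exp (τ (p j) • A (p j))) *ᵥ
          (exp ((d (j + 1) - τ (p j)) • A (p j)) *ᵥ (resetTransition A R p d j *ᵥ x)) := by
      simp only [resetTransition, hsplit, mulVec_mulVec, Matrix.mul_assoc]
    rw [hstep]
    exact (hjump _ _ _).trans <| (hflow _ _ (sub_nonneg.2 hdwell)).trans <|
      ih fun k hk hkj => hd k hk (hkj.trans j.le_succ)

end ResetSwitchedSystem

theorem reset_system_stable_of_MLF_mode_dependent_dwell_general {n : ℕ} {P : Type*} [Fintype P]
    (A : P → Matrix (Fin n) (Fin n) ℝ)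
    (R : P → P → Matrix (Fin n) (Fin n) ℝ)
    (τ : P → ℝ)
    (Q : P → Matrix (Fin n) (Fin n) ℝ)
    (hQ : ∀ p, (Q p).PosDef)
    (hQA : ∀ p, (-(Q p * A p + (A p)ᵀ * Q p)).PosDef)
    (hLMI : ∀ p q, (Q q -
      (exp (τ q • A q))ᵀ * (R q p)ᵀ * Q p * R q p * exp (τ q • A q)).PosSemidef) :
    ∃ C > (0 : ℝ), ∀ (j : ℕ) (p : ℕ → P) (d : ℕ → ℝ),
      (∀ k, 1 ≤ k → k ≤ j → τ (p (k - 1)) ≤ d k) →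
      ∀ s : ℝ, 0 ≤ s →
        ‖exp (s • A (p j)) * resetTransition A R p d j‖ ≤ C := by
  choose S hS hQS using fun p => (hQ p).exists_isUnit_eq_transpose_mul_self
  obtain ⟨c, hc⟩ := Finite.exists_le fun pq : P × P => ‖(S pq.1)⁻¹‖ * ‖S pq.2‖
  have hflow (p : P) (x : Fin n → ℝ) {s : ℝ} (hs : 0 ≤ s) :=
    dotProduct_mulVec_exp_smul_le_s18 (hQA p).posSemidef x hs
  have hjump (q p : P) := dotProduct_mulVec_le_of_posSemidef_sub_s18 (E := R q p * exp (τ q • A q))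
    (by simpa only [transpose_mul, Matrix.mul_assoc] using hLMI p q)
  refine ⟨max c 1, by positivity, fun j p d hd s hs => ?_⟩
  calc ‖exp (s • A (p j)) * resetTransition A R p d j‖ ≤ ‖(S (p j))⁻¹‖ * ‖S (p 0)‖ := by
        refine l2_opNorm_le_of_dotProduct_mulVec_le (hS (p j)) fun x => ?_
        rw [← hQS, ← hQS, ← mulVec_mulVec]
        exact (hflow _ _ hs).trans (dotProduct_mulVec_resetTransition_le hflow hjump hd x)
    _ ≤ max c 1 := (hc (p j, p 0)).trans (le_max_left _ _)

/-- Mode-dependent MLF dwell time criterion for reset switched systems: if there are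
symmetric positive definite `Q_p` with `Q_p A_p + A_pᵀ Q_p` negative definite and
`exp(τ_q A_q)ᵀ R_{(q,p)}ᵀ Q_p R_{(q,p)} exp(τ_q A_q) ⪯ Q_q` for all `p, q`, then the reset
switched system is stable for every switching signal with mode-dependent dwell times
`(τ_p)`. -/
theorem reset_system_stable_of_MLF_mode_dependent_dwell {n : ℕ} {P : Type*} [Fintype P]
    (A : P → Matrix (Fin n) (Fin n) ℝ)
    (R : P → P → Matrix (Fin n) (Fin n) ℝ)
    (τ : P → ℝ) (hτ : ∀ p, 0 < τ p)
    (Q : P → Matrix (Fin n) (Fin n) ℝ)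
    (hQ : ∀ p, (Q p).PosDef)
    (hQA : ∀ p, (-(Q p * A p + (A p)ᵀ * Q p)).PosDef)
    (hLMI : ∀ p q, (Q q -
      (exp (τ q • A q))ᵀ * (R q p)ᵀ * Q p * R q p * exp (τ q • A q)).PosSemidef) :
    ∃ C > (0 : ℝ), ∀ (j : ℕ) (p : ℕ → P) (d : ℕ → ℝ),
      (∀ k, 1 ≤ k → k ≤ j → τ (p (k - 1)) ≤ d k) →
      ∀ s : ℝ, 0 ≤ s →
        ‖exp (s • A (p j)) * resetTransition A R p d j‖ ≤ C :=
  reset_system_stable_of_MLF_mode_dependent_dwell_general A R τ Q hQ hQA hLMI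
end
end
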